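/- arXiv:math-ph/0012020 — 5 statements merged into one kernel-verified Lean document; each statement's English description precedes it below -/
import Mathlib

section
/- Let A be a unital C*-algebra, α : ℝ → Aut(A) a strongly continuous one-parameter group of *-automorphisms, and θ an isometric conjugate-linear *-automorphism of A such that θ ∘ α_t = α_{−t} ∘ θ for all t ∈ ℝ. Fix β > 0 and let ω be a state on A satisfying the β-KMS condition with respect to α. Then the functional θ*ω defined by (θ*ω)(a) := ω(θ(a*)) is again a state on A and satisfies the β-KMS condition with respect to α. -/
open scoped ComplexOrder

noncomputable section

/-- The closed strip `{z : ℂ | -β ≤ Im z ≤ 0}`. -/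
def closedStrip (β : ℝ) : Set ℂ := {z | -β ≤ z.im ∧ z.im ≤ 0}

/-- The open strip `{z : ℂ | -β < Im z < 0}`. -/
def openStrip (β : ℝ) : Set ℂ := {z | -β < z.im ∧ z.im < 0}

/-- A (complex linear) functional `ω` is a state if `ω 1 = 1` and `ω (a* a) ≥ 0` for all `a`. -/
def IsState {A : Type*} [NormedRing A] [StarRing A] [NormedAlgebra ℂ A]
    (ω : A →ₗ[ℂ] ℂ) : Prop :=
  ω 1 = 1 ∧ ∀ a : A, 0 ≤ ω (star a * a)

/-- The β-KMS condition for a functional `ω` with respect to a one-parameter group `α`: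
for all `a b` there is a bounded continuous function on the closed strip, holomorphic on the
open strip, with boundary values `ω (b * α t a)` and `ω (α t a * b)`. -/
def IsKMS {A : Type*} [NormedRing A] [StarRing A] [NormedAlgebra ℂ A]
    (β : ℝ) (α : ℝ → A → A) (ω : A →ₗ[ℂ] ℂ) : Prop :=
  ∀ a b : A, ∃ F : ℂ → ℂ,
    ContinuousOn F (closedStrip β) ∧
    (∃ C : ℝ, ∀ z ∈ closedStrip β, ‖F z‖ ≤ C) ∧
    DifferentiableOn ℂ F (openStrip β) ∧
    (∀ t : ℝ, F t = ω (b * α t a)) ∧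
    (∀ t : ℝ, F (t - β * Complex.I) = ω (α t a * b))

/-- If `ω` is a β-KMS state for the strongly continuous one-parameter
group `α` of *-automorphisms of a unital C*-algebra `A`, and `θ` is an isometric
conjugate-linear *-automorphism with `θ ∘ α t = α (-t) ∘ θ`, then the functional
`a ↦ ω (θ (a*))` is again a state and satisfies the β-KMS condition for `α`. -/
theorem pct_invariance_of_KMS_states
    {A : Type*} [NormedRing A] [StarRing A] [CStarRing A] [NormedAlgebra ℂ A]
    [CompleteSpace A] [StarModule ℂ A]
    (α : ℝ → A ≃⋆ₐ[ℂ] A)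
    (hα_grp : ∀ s t : ℝ, ∀ a : A, α (s + t) a = α s (α t a))
    (hα_zero : ∀ a : A, α 0 a = a)
    (hα_cont : ∀ a : A, Continuous fun t : ℝ => α t a)
    (θ : A → A)
    (hθ_bij : Function.Bijective θ)
    (hθ_add : ∀ a b : A, θ (a + b) = θ a + θ b)
    (hθ_smul : ∀ (c : ℂ) (a : A), θ (c • a) = (starRingEnd ℂ c) • θ a)
    (hθ_mul : ∀ a b : A, θ (a * b) = θ a * θ b)
    (hθ_star : ∀ a : A, θ (star a) = star (θ a))
    (hθ_isom : ∀ a : A, ‖θ a‖ = ‖a‖)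
    (hθα : ∀ (t : ℝ) (a : A), θ (α t a) = α (-t) (θ a))
    (β : ℝ) (hβ : 0 < β)
    (ω : A →ₗ[ℂ] ℂ) (hω_state : IsState ω)
    (hω_KMS : IsKMS β (fun t a => α t a) ω) :
    ∃ ω' : A →ₗ[ℂ] ℂ,
      (∀ a : A, ω' a = ω (θ (star a))) ∧
      IsState ω' ∧
      IsKMS β (fun t a => α t a) ω' := by
  have hθ1 : θ 1 = 1 := by
    obtain ⟨x, hx⟩ := hθ_bij.2 1
    have h := hθ_mul 1 x
    rw [one_mul, hx, mul_one] at h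
    exact h.symm
  refine ⟨{ toFun := fun a => ω (θ (star a))
            map_add' := fun a b => by
              show ω (θ (star (a + b))) = ω (θ (star a)) + ω (θ (star b))
              rw [star_add, hθ_add, map_add]
            map_smul' := fun c a => by
              show ω (θ (star (c • a))) = RingHom.id ℂ c • ω (θ (star a))
              rw [star_smul, hθ_smul, starRingEnd_apply, star_star, map_smul]
              rfl }, fun a => rfl, ⟨?_, ?_⟩, ?_⟩
  · show ω (θ (star 1)) = 1
    rw [star_one, hθ1, hω_state.1]
  · intro a
    show 0 ≤ ω (θ (star (star a * a)))
    have h : star (star a * a) = star a * a := by rw [star_mul, star_star]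
    rw [h, hθ_mul, hθ_star]
    exact hω_state.2 (θ a)
  · intro a b
    obtain ⟨F, hF_cont, ⟨C, hC⟩, hF_diff, hF0, hFβ⟩ := hω_KMS (θ (star a)) (θ (star b))
    have hg : ∀ z : ℂ, (-z - β * Complex.I).im = -z.im - β := by
      intro z; simp
    have hmapsC : Set.MapsTo (fun z : ℂ => -z - β * Complex.I)
        (closedStrip β) (closedStrip β) := by
      intro z hz
      obtain ⟨h1, h2⟩ := hz
      constructor <;> rw [hg z] <;> linarith
    have hmapsO : Set.MapsTo (fun z : ℂ => -z - β * Complex.I)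
        (openStrip β) (openStrip β) := by
      intro z hz
      obtain ⟨h1, h2⟩ := hz
      constructor <;> rw [hg z] <;> linarith
    have hgc : Continuous (fun z : ℂ => -z - β * Complex.I) := by continuity
    have hgd : Differentiable ℂ (fun z : ℂ => -z - β * Complex.I) := by
      apply Differentiable.sub <;> simp [differentiable_neg]
    refine ⟨fun z => F (-z - β * Complex.I),
      hF_cont.comp hgc.continuousOn hmapsC,
      ⟨C, fun z hz => hC _ (hmapsC hz)⟩,
      hF_diff.comp hgd.differentiableOn hmapsO, ?_, ?_⟩
    · intro t
      have harg : (-(t : ℂ) - β * Complex.I) = ((-t : ℝ) : ℂ) - β * Complex.I := by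
        push_cast; ring
      show F (-(t : ℂ) - β * Complex.I) = ω (θ (star (b * α t a)))
      rw [harg, hFβ (-t)]
      congr 1
      rw [star_mul, hθ_mul, ← map_star (α t) a, hθ_star, ← hθ_star, hθα, hθ_star]
    · intro t
      have harg : (-((t : ℂ) - β * Complex.I) - β * Complex.I) = ((-t : ℝ) : ℂ) := by
        push_cast; ring
      show F (-((t : ℂ) - β * Complex.I) - β * Complex.I) = ω (θ (star (α t a * b)))
      rw [harg, hF0 (-t)]
      congr 1
      rw [star_mul, hθ_mul, ← map_star (α t) a, hθ_star, ← hθ_star, hθα, hθ_star]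
end
end

section
/- Let d ≥ 2 and equip ℝ^d with the Minkowski bilinear form ⟨x,y⟩ = x⁰y⁰ − Σ_{i=1}^{d−1} xⁱyⁱ. Let ℓ₁, ℓ₂ ∈ ℝ^d be linearly independent vectors with ⟨ℓᵢ,ℓᵢ⟩ = 0 and ℓᵢ⁰ > 0 (i = 1,2), and let W(ℓ₁,ℓ₂) = {λℓ₁ + μℓ₂ + k : λ > 0, μ < 0, ⟨k,ℓ₁⟩ = ⟨k,ℓ₂⟩ = 0}. Then the interior of the spacelike complement of W(ℓ₁,ℓ₂), i.e. the interior of {x ∈ ℝ^d : ⟨x−y, x−y⟩ < 0 for all y ∈ W(ℓ₁,ℓ₂)}, equals W(ℓ₂,ℓ₁). -/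
noncomputable section

/-- The Minkowski bilinear form on `ℝ^d`: `⟨x,y⟩ = x⁰y⁰ − Σ_{i≠0} xⁱyⁱ`. -/
def minkD (d : ℕ) [NeZero d] (x y : Fin d → ℝ) : ℝ :=
  x 0 * y 0 - ∑ i ∈ Finset.univ.erase (0 : Fin d), x i * y i

variable {d : ℕ} [NeZero d]

lemma minkD_comm (x y : Fin d → ℝ) : minkD d x y = minkD d y x := by
  simp [minkD, mul_comm]

lemma minkD_add_left (x y z : Fin d → ℝ) :
    minkD d (x + y) z = minkD d x z + minkD d y z := by
  simp [minkD, add_mul, Finset.sum_add_distrib]; ring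

lemma minkD_smul_left (a : ℝ) (x z : Fin d → ℝ) :
    minkD d (a • x) z = a * minkD d x z := by
  simp only [minkD, Pi.smul_apply, smul_eq_mul, mul_sub, Finset.mul_sum]; ring

lemma minkD_sub_left (x y z : Fin d → ℝ) :
    minkD d (x - y) z = minkD d x z - minkD d y z := by
  simp [minkD, sub_mul, Finset.sum_sub_distrib]; ring

lemma minkD_add_right (x y z : Fin d → ℝ) :
    minkD d z (x + y) = minkD d z x + minkD d z y := by
  rw [minkD_comm, minkD_add_left, minkD_comm x z, minkD_comm y z]

lemma minkD_smul_right (a : ℝ) (x z : Fin d → ℝ) :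
    minkD d z (a • x) = a * minkD d z x := by
  rw [minkD_comm, minkD_smul_left, minkD_comm x z]

lemma mink_orth_nonpos (l v : Fin d → ℝ) (hnull : minkD d l l = 0) (hfut : 0 < l 0)
    (horth : minkD d v l = 0) : minkD d v v ≤ 0 := by
  set s := Finset.univ.erase (0 : Fin d) with hs
  have hcs := Finset.sum_mul_sq_le_sq_mul_sq s v l
  have e1 : ∑ i ∈ s, v i ^ 2 = ∑ i ∈ s, v i * v i := by simp [sq]
  have e2 : ∑ i ∈ s, l i ^ 2 = ∑ i ∈ s, l i * l i := by simp [sq]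
  rw [e1, e2] at hcs
  have h1 : v 0 * l 0 = ∑ i ∈ s, v i * l i := by
    have := horth; simp only [minkD, ← hs] at this; linarith
  have h2 : l 0 * l 0 = ∑ i ∈ s, l i * l i := by
    have := hnull; simp only [minkD, ← hs] at this; linarith
  rw [← h1, ← h2] at hcs
  simp only [minkD, ← hs]
  nlinarith [hcs, mul_pos hfut hfut]

lemma minkD_sub_right (x y z : Fin d → ℝ) :
    minkD d z (x - y) = minkD d z x - minkD d z y := by
  rw [minkD_comm, minkD_sub_left, minkD_comm x z, minkD_comm y z]

lemma mink_pos (l₁ l₂ : Fin d → ℝ) (hindep : LinearIndependent ℝ ![l₁, l₂])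
    (hl₁_null : minkD d l₁ l₁ = 0) (hl₁_fut : 0 < l₁ 0)
    (hl₂_null : minkD d l₂ l₂ = 0) (hl₂_fut : 0 < l₂ 0) :
    0 < minkD d l₁ l₂ := by
  set s := Finset.univ.erase (0 : Fin d) with hs
  have hcs := Finset.sum_mul_sq_le_sq_mul_sq s l₁ l₂
  have e1 : ∑ i ∈ s, l₁ i ^ 2 = l₁ 0 * l₁ 0 := by
    have := hl₁_null; simp only [minkD, ← hs] at this
    simp only [sq]; linarith
  have e2 : ∑ i ∈ s, l₂ i ^ 2 = l₂ 0 * l₂ 0 := by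
    have := hl₂_null; simp only [minkD, ← hs] at this
    simp only [sq]; linarith
  rw [e1, e2] at hcs
  have hge : 0 ≤ minkD d l₁ l₂ := by
    simp only [minkD, ← hs]
    nlinarith [mul_pos hl₁_fut hl₂_fut]
  rcases hge.lt_or_eq with h | h
  · exact h
  · exfalso
    have hp0 : minkD d l₁ l₂ = 0 := h.symm
    have hq0 : minkD d l₂ l₁ = 0 := (minkD_comm _ _).trans hp0
    set v : Fin d → ℝ := l₂ 0 • l₁ - l₁ 0 • l₂ with hv
    have hvv : minkD d v v = 0 := by
      rw [hv]
      simp only [minkD_sub_left, minkD_sub_right, minkD_smul_left, minkD_smul_right]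
      linear_combination (l₂ 0 * l₂ 0) * hl₁_null + (l₁ 0 * l₁ 0) * hl₂_null
        - (l₂ 0 * l₁ 0) * hp0 - (l₁ 0 * l₂ 0) * hq0
    have hv0 : v 0 = 0 := by simp [hv, mul_comm]
    have hsum : ∑ i ∈ s, v i * v i = 0 := by
      have := hvv; simp only [minkD, ← hs, hv0] at this; linarith
    have hall := (Finset.sum_eq_zero_iff_of_nonneg
      (fun i _ => mul_self_nonneg (v i))).1 hsum
    have hv_eq : v = 0 := by
      funext i
      by_cases hi : i = 0
      · rw [hi]; exact hv0
      · exact mul_self_eq_zero.1 (hall i (Finset.mem_erase.2 ⟨hi, Finset.mem_univ _⟩))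
    have := (LinearIndependent.pair_iff.1 hindep (l₂ 0) (-(l₁ 0))
      (by rw [neg_smul, ← sub_eq_add_neg]; exact hv_eq)).1
    exact absurd this hl₂_fut.ne'

lemma mink_interior_le (l w : Fin d → ℝ) (hw : minkD d w l ≠ 0) :
    interior {x : Fin d → ℝ | minkD d x l ≤ 0} = {x | minkD d x l < 0} := by
  let g : (Fin d → ℝ) →ₗ[ℝ] ℝ :=
    { toFun := fun x => minkD d x l
      map_add' := fun x y => minkD_add_left x y l
      map_smul' := fun a x => minkD_smul_left a x l }
  let G : (Fin d → ℝ) →L[ℝ] ℝ := LinearMap.toContinuousLinearMap g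
  have hGapp : ∀ x, G x = minkD d x l := fun x => rfl
  have hsurj : Function.Surjective G := by
    intro r
    refine ⟨(r / minkD d w l) • w, ?_⟩
    rw [hGapp, minkD_smul_left]
    field_simp
  have hopen : IsOpenMap G := ContinuousLinearMap.isOpenMap G hsurj
  have key : interior (G ⁻¹' Set.Iic 0) = G ⁻¹' Set.Iio 0 := by
    rw [← hopen.preimage_interior_eq_interior_preimage G.continuous, interior_Iic]
  have h1 : G ⁻¹' Set.Iic 0 = {x : Fin d → ℝ | minkD d x l ≤ 0} := rfl
  have h2 : G ⁻¹' Set.Iio 0 = {x : Fin d → ℝ | minkD d x l < 0} := rfl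
  rw [h1, h2] at key
  exact key

lemma mink_interior_ge (l w : Fin d → ℝ) (hw : minkD d w l ≠ 0) :
    interior {x : Fin d → ℝ | 0 ≤ minkD d x l} = {x | 0 < minkD d x l} := by
  let g : (Fin d → ℝ) →ₗ[ℝ] ℝ :=
    { toFun := fun x => minkD d x l
      map_add' := fun x y => minkD_add_left x y l
      map_smul' := fun a x => minkD_smul_left a x l }
  let G : (Fin d → ℝ) →L[ℝ] ℝ := LinearMap.toContinuousLinearMap g
  have hGapp : ∀ x, G x = minkD d x l := fun x => rfl
  have hsurj : Function.Surjective G := by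
    intro r
    refine ⟨(r / minkD d w l) • w, ?_⟩
    rw [hGapp, minkD_smul_left]
    field_simp
  have hopen : IsOpenMap G := ContinuousLinearMap.isOpenMap G hsurj
  have key : interior (G ⁻¹' Set.Ici 0) = G ⁻¹' Set.Ioi 0 := by
    rw [← hopen.preimage_interior_eq_interior_preimage G.continuous, interior_Ici]
  have h1 : G ⁻¹' Set.Ici 0 = {x : Fin d → ℝ | 0 ≤ minkD d x l} := rfl
  have h2 : G ⁻¹' Set.Ioi 0 = {x : Fin d → ℝ | 0 < minkD d x l} := rfl
  rw [h1, h2] at key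
  exact key


/-- The wedge `W(ℓ₁,ℓ₂) = {λℓ₁ + μℓ₂ + k : λ > 0, μ < 0, ⟨k,ℓ₁⟩ = ⟨k,ℓ₂⟩ = 0}`. -/
def wedgeOf (d : ℕ) [NeZero d] (l₁ l₂ : Fin d → ℝ) : Set (Fin d → ℝ) :=
  {x | ∃ (lam mu : ℝ) (k : Fin d → ℝ), 0 < lam ∧ mu < 0 ∧
    minkD d k l₁ = 0 ∧ minkD d k l₂ = 0 ∧ x = lam • l₁ + mu • l₂ + k}

/-- For linearly independent future-pointing lightlike vectors
`ℓ₁, ℓ₂` in `ℝ^d` (`d ≥ 2`), the interior of the spacelike complement of the wedge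
`W(ℓ₁,ℓ₂)` equals the opposite wedge `W(ℓ₂,ℓ₁)`. -/
theorem interior_spacelike_complement_of_wedge
    (d : ℕ) [NeZero d] (hd : 2 ≤ d)
    (l₁ l₂ : Fin d → ℝ)
    (hindep : LinearIndependent ℝ ![l₁, l₂])
    (hl₁_null : minkD d l₁ l₁ = 0) (hl₁_fut : 0 < l₁ 0)
    (hl₂_null : minkD d l₂ l₂ = 0) (hl₂_fut : 0 < l₂ 0) :
    interior {x : Fin d → ℝ | ∀ y ∈ wedgeOf d l₁ l₂, minkD d (x - y) (x - y) < 0}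
      = wedgeOf d l₂ l₁ := by
  have hp : 0 < minkD d l₁ l₂ :=
    mink_pos l₁ l₂ hindep hl₁_null hl₁_fut hl₂_null hl₂_fut
  have hq : minkD d l₂ l₁ = minkD d l₁ l₂ := minkD_comm _ _
  -- expansion of the form on combinations c₁•l₁ + c₂•l₂ + w with w ⊥ l₁, l₂
  have expand : ∀ (c₁ c₂ : ℝ) (w : Fin d → ℝ), minkD d w l₁ = 0 → minkD d w l₂ = 0 →
      minkD d (c₁ • l₁ + c₂ • l₂ + w) (c₁ • l₁ + c₂ • l₂ + w)
        = 2 * c₁ * c₂ * minkD d l₁ l₂ + minkD d w w := by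
    intro c₁ c₂ w hw1 hw2
    have hw1' : minkD d l₁ w = 0 := (minkD_comm _ _).trans hw1
    have hw2' : minkD d l₂ w = 0 := (minkD_comm _ _).trans hw2
    simp only [minkD_add_left, minkD_add_right, minkD_smul_left, minkD_smul_right]
    linear_combination (c₁ * c₁) * hl₁_null + (c₂ * c₂) * hl₂_null + (c₂ * c₁) * hq
      + c₁ * hw1 + c₂ * hw2 + c₁ * hw1' + c₂ * hw2'
  have hS : {x : Fin d → ℝ | ∀ y ∈ wedgeOf d l₁ l₂, minkD d (x - y) (x - y) < 0}
      = {x | minkD d x l₂ ≤ 0} ∩ {x | 0 ≤ minkD d x l₁} := by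
    ext x
    simp only [Set.mem_setOf_eq, Set.mem_inter_iff]
    set a : ℝ := minkD d x l₂ / minkD d l₁ l₂ with ha
    set b : ℝ := minkD d x l₁ / minkD d l₁ l₂ with hb
    set k : Fin d → ℝ := x - a • l₁ - b • l₂ with hk
    have hk1 : minkD d k l₁ = 0 := by
      rw [hk]
      simp only [minkD_sub_left, minkD_smul_left, hl₁_null, hq]
      rw [hb]; field_simp; ring
    have hk2 : minkD d k l₂ = 0 := by
      rw [hk]
      simp only [minkD_sub_left, minkD_smul_left, hl₂_null, hq]
      rw [ha]; field_simp; ring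
    constructor
    · intro hx
      constructor
      · by_contra hcon
        push_neg at hcon
        have hapos : 0 < a := div_pos hcon hp
        set lam : ℝ := a / 2 with hlam
        set mu : ℝ := -|b| - 1 with hmu
        have hmu0 : mu < 0 := by
          rw [hmu]; have := abs_nonneg b; linarith
        have hy := hx (lam • l₁ + mu • l₂ + k)
          ⟨lam, mu, k, by rw [hlam]; linarith, hmu0, hk1, hk2, rfl⟩
        have hxy : x - (lam • l₁ + mu • l₂ + k)
            = (a - lam) • l₁ + (b - mu) • l₂ + (0 : Fin d → ℝ) := by
          rw [hk]; module
        rw [hxy, expand (a - lam) (b - mu) 0 (by simp [minkD]) (by simp [minkD])] at hy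
        have hz : minkD d (0 : Fin d → ℝ) (0 : Fin d → ℝ) = 0 := by simp [minkD]
        rw [hz] at hy
        have h1 : 0 < a - lam := by rw [hlam]; linarith
        have h2 : 0 < b - mu := by
          rw [hmu]; have := neg_abs_le b; linarith
        nlinarith [mul_pos (mul_pos h1 h2) hp]
      · by_contra hcon
        push_neg at hcon
        have hbneg : b < 0 := div_neg_of_neg_of_pos hcon hp
        set lam : ℝ := |a| + 1 with hlam
        set mu : ℝ := b / 2 with hmu
        have hlam0 : 0 < lam := by
          rw [hlam]; have := abs_nonneg a; linarith
        have hy := hx (lam • l₁ + mu • l₂ + k)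
          ⟨lam, mu, k, hlam0, by rw [hmu]; linarith, hk1, hk2, rfl⟩
        have hxy : x - (lam • l₁ + mu • l₂ + k)
            = (a - lam) • l₁ + (b - mu) • l₂ + (0 : Fin d → ℝ) := by
          rw [hk]; module
        rw [hxy, expand (a - lam) (b - mu) 0 (by simp [minkD]) (by simp [minkD])] at hy
        have hz : minkD d (0 : Fin d → ℝ) (0 : Fin d → ℝ) = 0 := by simp [minkD]
        rw [hz] at hy
        have h1 : a - lam < 0 := by
          rw [hlam]; have := le_abs_self a; linarith
        have h2 : b - mu < 0 := by rw [hmu]; linarith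
        nlinarith [mul_pos (mul_pos (neg_pos.2 h1) (neg_pos.2 h2)) hp]
    · rintro ⟨h2, h1⟩ y ⟨lam, mu, k', hlam, hmu, hk'1, hk'2, rfl⟩
      have ha0 : a ≤ 0 := div_nonpos_of_nonpos_of_nonneg h2 hp.le
      have hb0 : 0 ≤ b := div_nonneg h1 hp.le
      have hw1 : minkD d (k - k') l₁ = 0 := by
        rw [minkD_sub_left, hk1, hk'1, sub_zero]
      have hw2 : minkD d (k - k') l₂ = 0 := by
        rw [minkD_sub_left, hk2, hk'2, sub_zero]
      have hww : minkD d (k - k') (k - k') ≤ 0 :=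
        mink_orth_nonpos l₁ (k - k') hl₁_null hl₁_fut hw1
      have hxy : x - (lam • l₁ + mu • l₂ + k')
          = (a - lam) • l₁ + (b - mu) • l₂ + (k - k') := by
        rw [hk]; module
      rw [hxy, expand (a - lam) (b - mu) (k - k') hw1 hw2]
      have h3 : a - lam < 0 := by linarith
      have h4 : 0 < b - mu := by linarith
      nlinarith [mul_pos (mul_pos (neg_pos.2 h3) h4) hp]
  rw [hS, interior_inter,
    mink_interior_le l₂ l₁ (by rw [← hq] at hp ⊢; exact hp.ne'),
    mink_interior_ge l₁ l₂ (ne_of_gt (hq ▸ hp))]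
  ext x
  simp only [Set.mem_inter_iff, Set.mem_setOf_eq, wedgeOf]
  constructor
  · rintro ⟨h2, h1⟩
    refine ⟨minkD d x l₁ / minkD d l₁ l₂, minkD d x l₂ / minkD d l₁ l₂,
      x - (minkD d x l₁ / minkD d l₁ l₂) • l₂ - (minkD d x l₂ / minkD d l₁ l₂) • l₁,
      div_pos h1 hp, div_neg_of_neg_of_pos h2 hp, ?_, ?_, by module⟩
    · simp only [minkD_sub_left, minkD_smul_left, hl₂_null, hq]
      field_simp; ring
    · simp only [minkD_sub_left, minkD_smul_left, hl₁_null, hq]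
      field_simp; ring
  · rintro ⟨lam, mu, k, hlam, hmu, hk2, hk1, rfl⟩
    simp only [minkD_add_left, minkD_smul_left, hl₂_null, hl₁_null, hq, hk1, hk2]
    constructor
    · nlinarith
    · nlinarith
end
end

section
/- Let τ : 𝒲 → 𝒲 be a bijection of the set of wedges in ℝ⁴ such that (i) τ ∘ τ = id, (ii) W₁ ⊆ W₂ implies τ(W₁) ⊆ τ(W₂), and (iii) if the closures of W₁ and W₂ are disjoint then τ(W₁) and τ(W₂) are disjoint. Then τ(W') = (τ(W))' for every wedge W ∈ 𝒲, where W' denotes the causal complement of W (which is again a wedge). -/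
noncomputable section

open Real

/-- The Minkowski bilinear form on `ℝ⁴`. -/
def mink (x y : Fin 4 → ℝ) : ℝ := x 0 * y 0 - x 1 * y 1 - x 2 * y 2 - x 3 * y 3

/-- The right wedge `W_r = {x : |x⁰| < x¹}`. -/
def rightWedge : Set (Fin 4 → ℝ) := {x | |x 0| < x 1}

/-- The proper orthochronous Lorentz group `𝓛₊↑`, as a set of real 4×4 matrices. -/
def LorentzPO : Set (Matrix (Fin 4) (Fin 4) ℝ) :=
  {Λ | (∀ x y, mink (Λ.mulVec x) (Λ.mulVec y) = mink x y) ∧ Λ.det = 1 ∧ 0 < Λ 0 0}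

/-- The set of wedges `𝒲`: images of the right wedge under proper orthochronous
Poincaré transformations. -/
def WedgeSet : Set (Set (Fin 4 → ℝ)) :=
  {S | ∃ (Λ : Matrix (Fin 4) (Fin 4) ℝ) (a : Fin 4 → ℝ), Λ ∈ LorentzPO ∧
    S = (fun x => Λ.mulVec x + a) '' rightWedge}

/-- The causal complement of a set: the interior of the set of points spacelike to it. -/
def causalCompl (S : Set (Fin 4 → ℝ)) : Set (Fin 4 → ℝ) :=
  interior {x | ∀ y ∈ S, mink (x - y) (x - y) < 0}

/-- The open forward light cone. -/
def fwdCone : Set (Fin 4 → ℝ) := {x | 0 < x 0 ∧ 0 < mink x x}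

/-- A double cone is a set of the form `(a + V⁺) ∩ (b − V⁺)` with `b − a ∈ V⁺`. -/
def IsDoubleCone (D : Set (Fin 4 → ℝ)) : Prop :=
  ∃ a b : Fin 4 → ℝ, b - a ∈ fwdCone ∧ D = {x | x - a ∈ fwdCone ∧ b - x ∈ fwdCone}

/-- The boost group `Λ_{W_r}(t)` of the right wedge. -/
def boost (t : ℝ) : Matrix (Fin 4) (Fin 4) ℝ :=
  Matrix.of fun i j =>
    if i = 0 ∧ j = 0 then Real.cosh (2 * π * t)
    else if i = 0 ∧ j = 1 then -Real.sinh (2 * π * t)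
    else if i = 1 ∧ j = 0 then -Real.sinh (2 * π * t)
    else if i = 1 ∧ j = 1 then Real.cosh (2 * π * t)
    else if i = j then 1 else 0

namespace WProof

abbrev V4 := Fin 4 → ℝ

def fp (x : V4) : ℝ := x 1 + x 0
def fm (x : V4) : ℝ := x 1 - x 0

lemma mem_rw {x : V4} : x ∈ rightWedge ↔ 0 < fp x ∧ 0 < fm x := by
  simp only [rightWedge, Set.mem_setOf_eq, abs_lt, fp, fm]
  constructor <;> (rintro ⟨h1, h2⟩; constructor <;> linarith)

def leftWedge : Set V4 := {x | x 1 < -|x 0|}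

lemma mem_lw {x : V4} : x ∈ leftWedge ↔ fp x < 0 ∧ fm x < 0 := by
  simp only [leftWedge, Set.mem_setOf_eq, fp, fm]
  rcases abs_cases (x 0) with ⟨h, _⟩ | ⟨h, _⟩ <;> rw [h] <;>
    constructor <;> (rintro h'; try rintro ⟨h1, h2⟩) <;>
    first
    | (constructor <;> linarith)
    | linarith

def WrC : Set V4 := {x | |x 0| ≤ x 1}
def WlC : Set V4 := {x | x 1 ≤ -|x 0|}

lemma mem_wrc {x : V4} : x ∈ WrC ↔ 0 ≤ fp x ∧ 0 ≤ fm x := by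
  simp only [WrC, Set.mem_setOf_eq, abs_le, fp, fm]
  constructor <;> (rintro ⟨h1, h2⟩; constructor <;> linarith)

lemma mem_wlc {x : V4} : x ∈ WlC ↔ fp x ≤ 0 ∧ fm x ≤ 0 := by
  simp only [WlC, Set.mem_setOf_eq, fp, fm]
  rcases abs_cases (x 0) with ⟨h, _⟩ | ⟨h, _⟩ <;> rw [h] <;>
    constructor <;> (rintro h'; try rintro ⟨h1, h2⟩) <;>
    first
    | (constructor <;> linarith)
    | linarith

lemma nonneg_of_forall_affine {A B : ℝ} (h : ∀ t : ℝ, 0 ≤ t → 0 < A + t * B) : 0 ≤ B := by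
  by_contra hB
  push_neg at hB
  have hBpos : 0 < -B := by linarith
  have ht : (0:ℝ) ≤ (|A| + 1) / (-B) := by positivity
  have := h _ ht
  have hAB : (|A| + 1) / (-B) * B = -(|A| + 1) := by
    rw [div_mul_eq_mul_div, div_neg, mul_div_assoc, div_self (ne_of_lt hB), mul_one]
  rw [hAB] at this
  rcases abs_cases A with ⟨hA, _⟩ | ⟨hA, _⟩ <;> linarith

lemma nonneg_limit {A B : ℝ} (h : ∀ ε : ℝ, 0 < ε → 0 ≤ A + ε * B) : 0 ≤ A := by
  by_contra hA
  push_neg at hA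
  have hB : 0 < B := by
    by_contra hB
    push_neg at hB
    have := h 1 one_pos
    nlinarith
  have hApos : 0 < -A := by linarith
  have hε : (0:ℝ) < -A / (2 * B) := by positivity
  have h2 := h _ hε
  have h3 : -A / (2 * B) * B = -A / 2 := by field_simp
  rw [h3] at h2
  linarith

end WProof
namespace WProof

def e1v : V4 := ![0,1,0,0]
def e2v : V4 := ![0,0,1,0]
def e3v : V4 := ![0,0,0,1]
def np : V4 := ![1,1,0,0]
def nm : V4 := ![-1,1,0,0]

lemma e1v0 : e1v 0 = 0 := rfl
lemma e1v1 : e1v 1 = 1 := rfl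

def MPres (N : Matrix (Fin 4) (Fin 4) ℝ) : Prop :=
  ∀ x y, mink (N.mulVec x) (N.mulVec y) = mink x y

lemma mink_zero_left (y : V4) : mink 0 y = 0 := by
  simp [mink]

lemma minj {N : Matrix (Fin 4) (Fin 4) ℝ} (hN : MPres N) : Function.Injective N.mulVec := by
  intro x y hxy
  have hd : N.mulVec (x - y) = 0 := by
    rw [Matrix.mulVec_sub, hxy, sub_self]
  have hz : ∀ z, mink (x - y) z = 0 := by
    intro z
    rw [← hN (x - y) z, hd, mink_zero_left]
  have h0 := hz ![1,0,0,0]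
  have h1 := hz ![0,1,0,0]
  have h2 := hz ![0,0,1,0]
  have h3 := hz ![0,0,0,1]
  simp only [mink] at h0 h1 h2 h3
  norm_num [Matrix.cons_val_two, Matrix.cons_val_three] at h0 h1 h2 h3
  funext i
  fin_cases i
  · show x 0 = y 0; linarith
  · show x 1 = y 1; linarith
  · show x 2 = y 2; linarith
  · show x 3 = y 3; linarith

end WProof
namespace WProof

@[simp] lemma np_0 : np 0 = 1 := rfl
@[simp] lemma np_1 : np 1 = 1 := rfl
@[simp] lemma np_2 : np 2 = 0 := rfl
@[simp] lemma np_3 : np 3 = 0 := rfl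
@[simp] lemma nm_0 : nm 0 = -1 := rfl
@[simp] lemma nm_1 : nm 1 = 1 := rfl
@[simp] lemma nm_2 : nm 2 = 0 := rfl
@[simp] lemma nm_3 : nm 3 = 0 := rfl
@[simp] lemma e1v_0 : e1v 0 = 0 := rfl
@[simp] lemma e1v_1 : e1v 1 = 1 := rfl
@[simp] lemma e1v_2 : e1v 2 = 0 := rfl
@[simp] lemma e1v_3 : e1v 3 = 0 := rfl
@[simp] lemma e2v_0 : e2v 0 = 0 := rfl
@[simp] lemma e2v_1 : e2v 1 = 0 := rfl
@[simp] lemma e2v_2 : e2v 2 = 1 := rfl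
@[simp] lemma e2v_3 : e2v 3 = 0 := rfl
@[simp] lemma e3v_0 : e3v 0 = 0 := rfl
@[simp] lemma e3v_1 : e3v 1 = 0 := rfl
@[simp] lemma e3v_2 : e3v 2 = 0 := rfl
@[simp] lemma e3v_3 : e3v 3 = 1 := rfl

lemma fp_add (x y : V4) : fp (x + y) = fp x + fp y := by simp [fp]; ring
lemma fm_add (x y : V4) : fm (x + y) = fm x + fm y := by simp [fm]; ring
lemma fp_smul (t : ℝ) (x : V4) : fp (t • x) = t * fp x := by simp [fp]; ring
lemma fm_smul (t : ℝ) (x : V4) : fm (t • x) = t * fm x := by simp [fm]; ring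

lemma decomp (x : V4) :
    x = (fp x / 2) • np + (fm x / 2) • nm + x 2 • e2v + x 3 • e3v := by
  funext i
  fin_cases i
  · show x 0 = _
    simp [fp, fm]
    ring
  · show x 1 = _
    simp [fp, fm]
    ring
  · show x 2 = _
    simp
  · show x 3 = _
    simp

end WProof
namespace WProof

variable {N : Matrix (Fin 4) (Fin 4) ℝ}

lemma fp_neg (x : V4) : fp (-x) = -fp x := by simp [fp]; ring
lemma fm_neg (x : V4) : fm (-x) = -fm x := by simp [fm]; ring

lemma hCc_ext (hC : ∀ d ∈ rightWedge, 0 ≤ fp (N.mulVec d) ∧ 0 ≤ fm (N.mulVec d)) :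
    ∀ d ∈ WrC, 0 ≤ fp (N.mulVec d) ∧ 0 ≤ fm (N.mulVec d) := by
  intro d hd
  rw [mem_wrc] at hd
  have key : ∀ ε : ℝ, 0 < ε → 0 ≤ fp (N.mulVec d) + ε * fp (N.mulVec e1v) ∧
      0 ≤ fm (N.mulVec d) + ε * fm (N.mulVec e1v) := by
    intro ε hε
    have hmem : d + ε • e1v ∈ rightWedge := by
      rw [mem_rw]
      rw [fp_add, fm_add, fp_smul, fm_smul]
      have : fp e1v = 1 := by simp [fp]
      have h2 : fm e1v = 1 := by simp [fm]
      rw [this, h2]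
      constructor <;> nlinarith [hd.1, hd.2]
    have := hC _ hmem
    rw [Matrix.mulVec_add, Matrix.mulVec_smul, fp_add, fm_add, fp_smul, fm_smul] at this
    exact this
  exact ⟨nonneg_limit (fun ε hε => (key ε hε).1), nonneg_limit (fun ε hε => (key ε hε).2)⟩

lemma edge_comp (hCc : ∀ d ∈ WrC, 0 ≤ fp (N.mulVec d) ∧ 0 ≤ fm (N.mulVec d)) :
    (N.mulVec e2v 0 = 0 ∧ N.mulVec e2v 1 = 0) ∧ (N.mulVec e3v 0 = 0 ∧ N.mulVec e3v 1 = 0) := by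
  have aux : ∀ v : V4, fp v = 0 → fm v = 0 →
      (N.mulVec v 0 = 0 ∧ N.mulVec v 1 = 0) := by
    intro v hvp hvm
    have hv : v ∈ WrC := by rw [mem_wrc, hvp, hvm]; norm_num
    have hv' : -v ∈ WrC := by rw [mem_wrc, fp_neg, fm_neg, hvp, hvm]; norm_num
    have h1 := hCc v hv
    have h2 := hCc (-v) hv'
    rw [Matrix.mulVec_neg, fp_neg, fm_neg] at h2
    have hfp : fp (N.mulVec v) = 0 := le_antisymm (by linarith [h2.1]) h1.1
    have hfm : fm (N.mulVec v) = 0 := le_antisymm (by linarith [h2.2]) h1.2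
    simp only [fp, fm] at hfp hfm
    constructor <;> linarith
  exact ⟨aux e2v (by simp [fp]) (by simp [fm]), aux e3v (by simp [fp]) (by simp [fm])⟩

lemma edge_det (hinj : Function.Injective N.mulVec)
    (hE2 : N.mulVec e2v 0 = 0 ∧ N.mulVec e2v 1 = 0)
    (hE3 : N.mulVec e3v 0 = 0 ∧ N.mulVec e3v 1 = 0) :
    N.mulVec e2v 2 * N.mulVec e3v 3 - N.mulVec e2v 3 * N.mulVec e3v 2 ≠ 0 := by
  set p := N.mulVec e2v 2 with hp
  set q := N.mulVec e2v 3 with hq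
  set r := N.mulVec e3v 2 with hr
  set s := N.mulVec e3v 3 with hs
  intro hdet
  have hz : ∀ a b : ℝ, a * p + b * r = 0 → a * q + b * s = 0 →
      a • e2v + b • e3v = 0 := by
    intro a b h1 h2
    have hN0 : N.mulVec (a • e2v + b • e3v) = 0 := by
      rw [Matrix.mulVec_add, Matrix.mulVec_smul, Matrix.mulVec_smul]
      funext i
      fin_cases i
      · show a • N.mulVec e2v 0 + b • N.mulVec e3v 0 = (0:ℝ)
        rw [hE2.1, hE3.1]; simp
      · show a • N.mulVec e2v 1 + b • N.mulVec e3v 1 = (0:ℝ)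
        rw [hE2.2, hE3.2]; simp
      · show a • N.mulVec e2v 2 + b • N.mulVec e3v 2 = (0:ℝ)
        simp only [smul_eq_mul, ← hp, ← hr]
        linarith
      · show a • N.mulVec e2v 3 + b • N.mulVec e3v 3 = (0:ℝ)
        simp only [smul_eq_mul, ← hq, ← hs]
        linarith
    have : a • e2v + b • e3v = (0:V4) := by
      apply hinj
      rw [hN0, Matrix.mulVec_zero]
    exact this
  have h1 : s • e2v + (-q) • e3v = 0 := hz s (-q) (by linear_combination hdet) (by ring)
  have hs0 : s = 0 := by
    have := congrFun h1 2
    simpa using this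
  have hq0 : q = 0 := by
    have := congrFun h1 3
    simp at this
    linarith
  have h2 : r • e2v + (-p) • e3v = 0 := by
    refine hz r (-p) (by ring) (by rw [hq0, hs0]; ring)
  have hr0 : r = 0 := by
    have := congrFun h2 2
    simpa using this
  have hp0 : p = 0 := by
    have := congrFun h2 3
    simp at this
    linarith
  have hE2z : N.mulVec e2v = 0 := by
    funext i
    fin_cases i
    · exact hE2.1
    · exact hE2.2
    · show N.mulVec e2v 2 = (0:V4) 2
      rw [← hp, hp0]; rfl
    · show N.mulVec e2v 3 = (0:V4) 3
      rw [← hq, hq0]; rfl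
  have : e2v = (0:V4) := hinj (by rw [hE2z, Matrix.mulVec_zero])
  have := congrFun this 2
  simpa using this

end WProof
namespace WProof

variable {N : Matrix (Fin 4) (Fin 4) ℝ}

lemma null_ray (hN : MPres N)
    (hCc : ∀ d ∈ WrC, 0 ≤ fp (N.mulVec d) ∧ 0 ≤ fm (N.mulVec d))
    {v : V4} (hv : v ∈ WrC) (hnull : mink v v = 0)
    (ho2 : mink v e2v = 0) (ho3 : mink v e3v = 0) (hvne : v ≠ 0) :
    ∃ α : ℝ, 0 < α ∧ (N.mulVec v = α • np ∨ N.mulVec v = α • nm) := by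
  have hinj := minj hN
  obtain ⟨hE2, hE3⟩ := edge_comp hCc
  have hdet := edge_det hinj hE2 hE3
  set z := N.mulVec v with hzdef
  have hz01 := hCc v hv
  have hznull : mink z z = 0 := by rw [hzdef, hN]; exact hnull
  have hzo2 : mink z (N.mulVec e2v) = 0 := by rw [hzdef, hN]; exact ho2
  have hzo3 : mink z (N.mulVec e3v) = 0 := by rw [hzdef, hN]; exact ho3
  simp only [mink] at hzo2 hzo3
  rw [hE2.1, hE2.2] at hzo2
  rw [hE3.1, hE3.2] at hzo3
  set p := N.mulVec e2v 2
  set q := N.mulVec e2v 3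
  set r := N.mulVec e3v 2
  set s := N.mulVec e3v 3
  have hz2 : z 2 = 0 := by
    have key : z 2 * (p * s - q * r) = 0 := by linear_combination (-s) * hzo2 + q * hzo3
    rcases mul_eq_zero.mp key with h | h
    · exact h
    · exact absurd h hdet
  have hz3 : z 3 = 0 := by
    have key : z 3 * (p * s - q * r) = 0 := by linear_combination r * hzo2 + (-p) * hzo3
    rcases mul_eq_zero.mp key with h | h
    · exact h
    · exact absurd h hdet
  simp only [mink, hz2, hz3] at hznull
  have hsq : (z 0 - z 1) * (z 0 + z 1) = 0 := by nlinarith [hznull]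
  rw [← hzdef] at hz01
  simp only [fp, fm] at hz01
  have hz1nn : (0:ℝ) ≤ z 1 := by linarith [hz01.1, hz01.2]
  have hz1pos : 0 < z 1 := by
    rcases eq_or_lt_of_le hz1nn with h | h
    · exfalso
      have hz0 : z 0 = 0 := by linarith [hz01.1, hz01.2]
      have hzz : z = (0:V4) := by
        funext i
        fin_cases i
        · show z 0 = 0; exact hz0
        · show z 1 = 0; exact h.symm
        · show z 2 = 0; exact hz2
        · show z 3 = 0; exact hz3
      apply hvne
      apply hinj
      rw [Matrix.mulVec_zero, ← hzdef]
      exact hzz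
    · exact h
  refine ⟨z 1, hz1pos, ?_⟩
  rcases mul_eq_zero.mp hsq with h | h
  · left
    funext i
    fin_cases i
    · show z 0 = z 1 • np 0
      simp; linarith
    · show z 1 = z 1 • np 1
      simp
    · show z 2 = z 1 • np 2
      simp [hz2]
    · show z 3 = z 1 • np 3
      simp [hz3]
  · right
    funext i
    fin_cases i
    · show z 0 = z 1 • nm 0
      simp; linarith
    · show z 1 = z 1 • nm 1
      simp
    · show z 2 = z 1 • nm 2
      simp [hz2]
    · show z 3 = z 1 • nm 3
      simp [hz3]

end WProof
namespace WProof

variable {N : Matrix (Fin 4) (Fin 4) ℝ}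

lemma fp_np : fp np = 2 := by simp [fp]; norm_num
lemma fm_np : fm np = 0 := by simp [fm]
lemma fp_nm : fp nm = 0 := by simp [fp]
lemma fm_nm : fm nm = 2 := by simp [fm]; norm_num

lemma rays (hN : MPres N)
    (hCc : ∀ d ∈ WrC, 0 ≤ fp (N.mulVec d) ∧ 0 ≤ fm (N.mulVec d)) :
    ∃ α β : ℝ, 0 < α ∧ 0 < β ∧
      ((N.mulVec np = α • np ∧ N.mulVec nm = β • nm) ∨
       (N.mulVec np = α • nm ∧ N.mulVec nm = β • np)) := by
  have hinj := minj hN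
  have hnpC : np ∈ WrC := by rw [mem_wrc, fp_np, fm_np]; norm_num
  have hnmC : nm ∈ WrC := by rw [mem_wrc, fp_nm, fm_nm]; norm_num
  obtain ⟨α, hα, hnp⟩ := null_ray hN hCc hnpC (by simp [mink]) (by simp [mink])
    (by simp [mink]) (fun h => by simpa using congrFun h 0)
  obtain ⟨β, hβ, hnm⟩ := null_ray hN hCc hnmC (by norm_num [mink]) (by simp [mink])
    (by simp [mink]) (fun h => by simpa using congrFun h 1)
  have same_ray_absurd : ∀ w : V4, N.mulVec np = α • w → N.mulVec nm = β • w → False := by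
    intro w h1 h2
    have : N.mulVec (β • np) = N.mulVec (α • nm) := by
      rw [Matrix.mulVec_smul, Matrix.mulVec_smul, h1, h2, smul_smul, smul_smul, mul_comm]
    have heq : β • np = α • nm := hinj this
    have h0 := congrFun heq 0
    have h1' := congrFun heq 1
    simp at h0 h1'
    nlinarith
  refine ⟨α, β, hα, hβ, ?_⟩
  rcases hnp with h1 | h1 <;> rcases hnm with h2 | h2
  · exact absurd (same_ray_absurd np h1 h2) (fun h => h)
  · exact Or.inl ⟨h1, h2⟩
  · exact Or.inr ⟨h1, h2⟩
  · exact absurd (same_ray_absurd nm h1 h2) (fun h => h)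

set_option maxHeartbeats 2000000 in
lemma rig_core (hN : MPres N)
    (hC : ∀ d ∈ rightWedge, 0 ≤ fp (N.mulVec d) ∧ 0 ≤ fm (N.mulVec d)) :
    N.mulVec '' rightWedge = rightWedge := by
  have hinj := minj hN
  have hCc := hCc_ext hC
  obtain ⟨hE2, hE3⟩ := edge_comp hCc
  have hdet := edge_det hinj hE2 hE3
  obtain ⟨α, β, hα, hβ, hcase⟩ := rays hN hCc
  set p := N.mulVec e2v 2
  set q := N.mulVec e2v 3
  set r := N.mulVec e3v 2
  set s := N.mulVec e3v 3
  have himg : ∀ x : V4, N.mulVec x =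
      (fp x / 2) • N.mulVec np + (fm x / 2) • N.mulVec nm
        + x 2 • N.mulVec e2v + x 3 • N.mulVec e3v := by
    intro x
    conv_lhs => rw [decomp x]
    rw [Matrix.mulVec_add, Matrix.mulVec_add, Matrix.mulVec_add,
      Matrix.mulVec_smul, Matrix.mulVec_smul, Matrix.mulVec_smul, Matrix.mulVec_smul]
  have hfpE2 : fp (N.mulVec e2v) = 0 := by simp [fp, hE2.1, hE2.2]
  have hfmE2 : fm (N.mulVec e2v) = 0 := by simp [fm, hE2.1, hE2.2]
  have hfpE3 : fp (N.mulVec e3v) = 0 := by simp [fp, hE3.1, hE3.2]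
  have hfmE3 : fm (N.mulVec e3v) = 0 := by simp [fm, hE3.1, hE3.2]
  apply Set.eq_of_subset_of_subset
  · rintro y ⟨x, hx, rfl⟩
    rw [mem_rw] at hx ⊢
    rw [himg x]
    rcases hcase with ⟨h1, h2⟩ | ⟨h1, h2⟩ <;>
      rw [h1, h2] <;>
      simp only [fp_add, fm_add, fp_smul, fm_smul, smul_smul] <;>
      rw [fp_np, fm_np, fp_nm, fm_nm, hfpE2, hfmE2, hfpE3, hfmE3] <;>
      constructor <;> nlinarith [hx.1, hx.2, hα, hβ]
  · intro y hy
    rw [mem_rw] at hy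
    set D := p * s - q * r with hD
    set a := (s * y 2 - r * y 3) / D with ha
    set b := (p * y 3 - q * y 2) / D with hb
    have hedge : (a • N.mulVec e2v + b • N.mulVec e3v) 0 = 0 ∧
        (a • N.mulVec e2v + b • N.mulVec e3v) 1 = 0 ∧
        (a • N.mulVec e2v + b • N.mulVec e3v) 2 = y 2 ∧
        (a • N.mulVec e2v + b • N.mulVec e3v) 3 = y 3 := by
      refine ⟨?_, ?_, ?_, ?_⟩ <;>
        simp only [Pi.add_apply, Pi.smul_apply, smul_eq_mul, hE2.1, hE2.2, hE3.1, hE3.2]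
      · ring
      · ring
      · rw [ha, hb]; field_simp; ring
      · rw [ha, hb]; field_simp; ring
    rcases hcase with ⟨h1, h2⟩ | ⟨h1, h2⟩
    · refine ⟨(fp y / (2*α)) • np + (fm y / (2*β)) • nm + a • e2v + b • e3v, ?_, ?_⟩
      · rw [mem_rw]
        simp only [fp_add, fm_add, fp_smul, fm_smul, fp_np, fm_np, fp_nm, fm_nm]
        have e2p : fp e2v = 0 := by simp [fp]
        have e2m : fm e2v = 0 := by simp [fm]
        have e3p : fp e3v = 0 := by simp [fp]
        have e3m : fm e3v = 0 := by simp [fm]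
        rw [e2p, e2m, e3p, e3m]
        constructor
        · have : fp y / (2*α) * 2 + fm y / (2*β) * 0 + a * 0 + b * 0 = fp y / α := by
            field_simp; ring
          rw [this]; exact div_pos hy.1 hα
        · have : fp y / (2*α) * 0 + fm y / (2*β) * 2 + a * 0 + b * 0 = fm y / β := by
            field_simp; ring
          rw [this]; exact div_pos hy.2 hβ
      · have hc1 : fp y / (2*α) * α = fp y / 2 := by
          field_simp
        have hc2 : fm y / (2*β) * β = fm y / 2 := by
          field_simp
        rw [Matrix.mulVec_add, Matrix.mulVec_add, Matrix.mulVec_add,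
          Matrix.mulVec_smul, Matrix.mulVec_smul, Matrix.mulVec_smul, Matrix.mulVec_smul,
          h1, h2, smul_smul, smul_smul, hc1, hc2]
        funext i
        have he := hedge
        fin_cases i
        · show ((fp y / 2) • np + (fm y / 2) • nm + a • N.mulVec e2v + b • N.mulVec e3v) 0 = y 0
          simp only [Pi.add_apply, Pi.smul_apply, smul_eq_mul, np_0, nm_0]
          have h0 := (he.1)
          simp only [Pi.add_apply, Pi.smul_apply, smul_eq_mul] at h0
          simp only [fp, fm]
          linarith
        · show ((fp y / 2) • np + (fm y / 2) • nm + a • N.mulVec e2v + b • N.mulVec e3v) 1 = y 1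
          simp only [Pi.add_apply, Pi.smul_apply, smul_eq_mul, np_1, nm_1]
          have h0 := (he.2.1)
          simp only [Pi.add_apply, Pi.smul_apply, smul_eq_mul] at h0
          simp only [fp, fm]
          linarith
        · show ((fp y / 2) • np + (fm y / 2) • nm + a • N.mulVec e2v + b • N.mulVec e3v) 2 = y 2
          simp only [Pi.add_apply, Pi.smul_apply, smul_eq_mul, np_2, nm_2]
          have h0 := (he.2.2.1)
          simp only [Pi.add_apply, Pi.smul_apply, smul_eq_mul] at h0
          linarith
        · show ((fp y / 2) • np + (fm y / 2) • nm + a • N.mulVec e2v + b • N.mulVec e3v) 3 = y 3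
          simp only [Pi.add_apply, Pi.smul_apply, smul_eq_mul, np_3, nm_3]
          have h0 := (he.2.2.2)
          simp only [Pi.add_apply, Pi.smul_apply, smul_eq_mul] at h0
          linarith
    · refine ⟨(fm y / (2*α)) • np + (fp y / (2*β)) • nm + a • e2v + b • e3v, ?_, ?_⟩
      · rw [mem_rw]
        simp only [fp_add, fm_add, fp_smul, fm_smul, fp_np, fm_np, fp_nm, fm_nm]
        have e2p : fp e2v = 0 := by simp [fp]
        have e2m : fm e2v = 0 := by simp [fm]
        have e3p : fp e3v = 0 := by simp [fp]
        have e3m : fm e3v = 0 := by simp [fm]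
        rw [e2p, e2m, e3p, e3m]
        constructor
        · have : fm y / (2*α) * 2 + fp y / (2*β) * 0 + a * 0 + b * 0 = fm y / α := by
            field_simp; ring
          rw [this]; exact div_pos hy.2 hα
        · have : fm y / (2*α) * 0 + fp y / (2*β) * 2 + a * 0 + b * 0 = fp y / β := by
            field_simp; ring
          rw [this]; exact div_pos hy.1 hβ
      · have hc1 : fp y / (2*β) * β = fp y / 2 := by
          field_simp
        have hc2 : fm y / (2*α) * α = fm y / 2 := by
          field_simp
        rw [Matrix.mulVec_add, Matrix.mulVec_add, Matrix.mulVec_add,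
          Matrix.mulVec_smul, Matrix.mulVec_smul, Matrix.mulVec_smul, Matrix.mulVec_smul,
          h1, h2, smul_smul, smul_smul, hc1, hc2]
        funext i
        have he := hedge
        fin_cases i
        · show ((fm y / 2) • nm + (fp y / 2) • np + a • N.mulVec e2v + b • N.mulVec e3v) 0 = y 0
          simp only [Pi.add_apply, Pi.smul_apply, smul_eq_mul, np_0, nm_0]
          have h0 := (he.1)
          simp only [Pi.add_apply, Pi.smul_apply, smul_eq_mul] at h0
          simp only [fp, fm]
          linarith
        · show ((fm y / 2) • nm + (fp y / 2) • np + a • N.mulVec e2v + b • N.mulVec e3v) 1 = y 1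
          simp only [Pi.add_apply, Pi.smul_apply, smul_eq_mul, np_1, nm_1]
          have h0 := (he.2.1)
          simp only [Pi.add_apply, Pi.smul_apply, smul_eq_mul] at h0
          simp only [fp, fm]
          linarith
        · show ((fm y / 2) • nm + (fp y / 2) • np + a • N.mulVec e2v + b • N.mulVec e3v) 2 = y 2
          simp only [Pi.add_apply, Pi.smul_apply, smul_eq_mul, np_2, nm_2]
          have h0 := (he.2.2.1)
          simp only [Pi.add_apply, Pi.smul_apply, smul_eq_mul] at h0
          linarith
        · show ((fm y / 2) • nm + (fp y / 2) • np + a • N.mulVec e2v + b • N.mulVec e3v) 3 = y 3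
          simp only [Pi.add_apply, Pi.smul_apply, smul_eq_mul, np_3, nm_3]
          have h0 := (he.2.2.2)
          simp only [Pi.add_apply, Pi.smul_apply, smul_eq_mul] at h0
          linarith

end WProof
namespace WProof

def aff (N : Matrix (Fin 4) (Fin 4) ℝ) (b : V4) : V4 → V4 := fun x => N.mulVec x + b

lemma aff_apply (N : Matrix (Fin 4) (Fin 4) ℝ) (b x : V4) :
    aff N b x = N.mulVec x + b := rfl

lemma aff_one_apply (u x : V4) : aff 1 u x = x + u := by
  rw [aff_apply, Matrix.one_mulVec]

lemma mem_aff_one {u x : V4} {S : Set V4} : x ∈ aff 1 u '' S ↔ x - u ∈ S := by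
  constructor
  · rintro ⟨z, hz, rfl⟩
    rw [aff_one_apply]
    simpa using hz
  · intro h
    exact ⟨x - u, h, by rw [aff_one_apply]; abel⟩

variable {N : Matrix (Fin 4) (Fin 4) ℝ}

lemma mulVec_inv_cancel (hdet : IsUnit N.det) (x : V4) :
    N.mulVec (N⁻¹.mulVec x) = x := by
  rw [Matrix.mulVec_mulVec, Matrix.mul_nonsing_inv _ hdet, Matrix.one_mulVec]

lemma inv_mulVec_cancel (hdet : IsUnit N.det) (x : V4) :
    N⁻¹.mulVec (N.mulVec x) = x := by
  rw [Matrix.mulVec_mulVec, Matrix.nonsing_inv_mul _ hdet, Matrix.one_mulVec]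

lemma mpres_inv (hN : MPres N) (hdet : IsUnit N.det) : MPres N⁻¹ := by
  intro x y
  have := hN (N⁻¹.mulVec x) (N⁻¹.mulVec y)
  rw [mulVec_inv_cancel hdet, mulVec_inv_cancel hdet] at this
  exact this.symm

lemma mpres_mul {M : Matrix (Fin 4) (Fin 4) ℝ} (hN : MPres N) (hM : MPres M) :
    MPres (N * M) := by
  intro x y
  rw [← Matrix.mulVec_mulVec, ← Matrix.mulVec_mulVec, hN, hM]

lemma aff_inj (hdet : IsUnit N.det) (b : V4) : Function.Injective (aff N b) := by
  intro x y hxy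
  simp only [aff_apply, add_left_inj] at hxy
  have := congrArg (N⁻¹.mulVec) hxy
  rwa [inv_mulVec_cancel hdet, inv_mulVec_cancel hdet] at this

lemma aff_aff (M : Matrix (Fin 4) (Fin 4) ℝ) (c : V4) (b x : V4) :
    aff N b (aff M c x) = aff (N * M) (N.mulVec c + b) x := by
  simp only [aff_apply, Matrix.mulVec_add, Matrix.mulVec_mulVec]
  abel

lemma aff_image_image (M : Matrix (Fin 4) (Fin 4) ℝ) (c b : V4) (S : Set V4) :
    aff N b '' (aff M c '' S) = aff (N * M) (N.mulVec c + b) '' S := by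
  rw [← Set.image_comp]
  apply congrArg (· '' S)
  funext x
  exact aff_aff M c b x

lemma aff_cancel (hdet : IsUnit N.det) (b : V4) (S : Set V4) :
    aff N⁻¹ (-(N⁻¹.mulVec b)) '' (aff N b '' S) = S := by
  rw [← Set.image_comp]
  have : (aff N⁻¹ (-(N⁻¹.mulVec b)) ∘ aff N b) = id := by
    funext x
    simp only [Function.comp_apply, aff_apply, Matrix.mulVec_add, inv_mulVec_cancel hdet, id]
    abel
  rw [this, Set.image_id]

end WProof
namespace WProof

variable {N : Matrix (Fin 4) (Fin 4) ℝ}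

lemma continuous_mulVec (M : Matrix (Fin 4) (Fin 4) ℝ) :
    Continuous (fun x : V4 => M.mulVec x) := by
  have : (fun x : V4 => M.mulVec x) = fun x => M.mulVecLin x := by
    funext x; rfl
  rw [this]
  exact M.mulVecLin.continuous_of_finiteDimensional

lemma continuous_aff (M : Matrix (Fin 4) (Fin 4) ℝ) (b : V4) :
    Continuous (aff M b) := by
  have : aff M b = fun x => M.mulVec x + b := rfl
  rw [this]
  exact (continuous_mulVec M).add continuous_const

def affHomeo (N : Matrix (Fin 4) (Fin 4) ℝ) (hdet : IsUnit N.det) (b : V4) :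
    Homeomorph V4 V4 where
  toFun := aff N b
  invFun := aff N⁻¹ (-(N⁻¹.mulVec b))
  left_inv := by
    intro x
    simp only [aff_apply, Matrix.mulVec_add, inv_mulVec_cancel hdet]
    abel
  right_inv := by
    intro x
    simp only [aff_apply, Matrix.mulVec_add, Matrix.mulVec_neg, mulVec_inv_cancel hdet]
    abel
  continuous_toFun := continuous_aff N b
  continuous_invFun := continuous_aff _ _

lemma aff_image_closure (hdet : IsUnit N.det) (b : V4) (S : Set V4) :
    closure (aff N b '' S) = aff N b '' closure S := by
  have := (affHomeo N hdet b).image_closure S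
  exact this.symm

lemma aff_image_interior (hdet : IsUnit N.det) (b : V4) (S : Set V4) :
    interior (aff N b '' S) = aff N b '' interior S := by
  have := (affHomeo N hdet b).image_interior S
  exact this.symm

lemma isOpen_rw : IsOpen rightWedge := by
  have : rightWedge = {x : V4 | |x 0| - x 1 < 0} := by
    ext x; simp [rightWedge, sub_neg]
  rw [this]
  apply isOpen_lt _ continuous_const
  exact ((continuous_apply 0).abs.sub (continuous_apply 1))

lemma isOpen_lw : IsOpen leftWedge := by
  have : leftWedge = {x : V4 | x 1 + |x 0| < 0} := by
    ext x
    simp only [leftWedge, Set.mem_setOf_eq]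
    constructor <;> intro h <;> linarith
  rw [this]
  apply isOpen_lt _ continuous_const
  exact ((continuous_apply 1).add (continuous_apply 0).abs)

lemma isClosed_wrc : IsClosed WrC := by
  have : WrC = {x : V4 | |x 0| - x 1 ≤ 0} := by
    ext x; simp [WrC, sub_nonpos]
  rw [this]
  exact isClosed_le ((continuous_apply 0).abs.sub (continuous_apply 1)) continuous_const

lemma isClosed_wlc : IsClosed WlC := by
  have : WlC = {x : V4 | x 1 + |x 0| ≤ 0} := by
    ext x
    simp only [WlC, Set.mem_setOf_eq]
    constructor <;> intro h <;> linarith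
  rw [this]
  exact isClosed_le ((continuous_apply 1).add (continuous_apply 0).abs) continuous_const

lemma dist_add_single (x : V4) (i : Fin 4) (c : ℝ) :
    dist x (x + c • (fun j => if j = i then (1:ℝ) else 0)) ≤ |c| := by
  rw [dist_pi_le_iff (abs_nonneg c)]
  intro j
  simp only [Pi.add_apply, Pi.smul_apply, smul_eq_mul]
  by_cases hj : j = i
  · simp [hj, Real.dist_eq]
  · simp [hj, Real.dist_eq]

lemma mem_closure_shift {S : Set V4} {x : V4} {i : Fin 4}
    (h : ∀ ε : ℝ, 0 < ε → x + ε • (fun j => if j = i then (1:ℝ) else 0) ∈ S) :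
    x ∈ closure S := by
  rw [Metric.mem_closure_iff]
  intro ε hε
  refine ⟨x + (ε/2) • (fun j => if j = i then (1:ℝ) else 0), h _ (by linarith), ?_⟩
  calc dist x (x + (ε/2) • (fun j => if j = i then (1:ℝ) else 0)) ≤ |ε/2| :=
        dist_add_single x i (ε/2)
    _ < ε := by rw [abs_of_pos (by linarith : (0:ℝ) < ε/2)]; linarith

lemma apply_shift (x : V4) (i : Fin 4) (c : ℝ) (k : Fin 4) :
    (x + c • (fun j => if j = i then (1:ℝ) else 0)) k = x k + (if k = i then c else 0) := by
  simp only [Pi.add_apply, Pi.smul_apply, smul_eq_mul]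
  by_cases hk : k = i <;> simp [hk]

lemma closure_rw : closure rightWedge = WrC := by
  apply Set.eq_of_subset_of_subset
  · apply closure_minimal _ isClosed_wrc
    intro x hx
    rw [mem_rw] at hx
    rw [mem_wrc]
    exact ⟨le_of_lt hx.1, le_of_lt hx.2⟩
  · intro x hx
    rw [mem_wrc] at hx
    apply mem_closure_shift (i := 1)
    intro ε hε
    rw [mem_rw]
    simp only [fp, fm, apply_shift]
    simp only [fp, fm] at hx
    norm_num
    constructor <;> linarith

lemma mem_closure_shift_neg {S : Set V4} {x : V4} {i : Fin 4}
    (h : ∀ ε : ℝ, 0 < ε → x + (-ε) • (fun j => if j = i then (1:ℝ) else 0) ∈ S) :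
    x ∈ closure S := by
  rw [Metric.mem_closure_iff]
  intro ε hε
  refine ⟨x + (-(ε/2)) • (fun j => if j = i then (1:ℝ) else 0), h _ (by linarith), ?_⟩
  calc dist x (x + (-(ε/2)) • (fun j => if j = i then (1:ℝ) else 0)) ≤ |(-(ε/2))| :=
        dist_add_single x i (-(ε/2))
    _ < ε := by rw [abs_neg, abs_of_pos (by linarith : (0:ℝ) < ε/2)]; linarith

lemma closure_lw : closure leftWedge = WlC := by
  apply Set.eq_of_subset_of_subset
  · apply closure_minimal _ isClosed_wlc
    intro x hx
    rw [mem_lw] at hx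
    rw [mem_wlc]
    exact ⟨le_of_lt hx.1, le_of_lt hx.2⟩
  · intro x hx
    rw [mem_wlc] at hx
    apply mem_closure_shift_neg (i := 1)
    intro ε hε
    rw [mem_lw]
    simp only [fp, fm, apply_shift]
    simp only [fp, fm] at hx
    norm_num
    constructor <;> linarith

lemma interior_wlc : interior WlC = leftWedge := by
  apply Set.eq_of_subset_of_subset
  · intro x hx
    rw [mem_interior_iff_mem_nhds, Metric.mem_nhds_iff] at hx
    obtain ⟨ε, hε, hball⟩ := hx
    have hy : x + (ε/2) • (fun j => if j = (1:Fin 4) then (1:ℝ) else 0) ∈ WlC := by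
      apply hball
      rw [Metric.mem_ball, dist_comm]
      calc dist x (x + (ε/2) • (fun j => if j = (1:Fin 4) then (1:ℝ) else 0)) ≤ |ε/2| :=
            dist_add_single x 1 (ε/2)
        _ < ε := by rw [abs_of_pos (by linarith : (0:ℝ) < ε/2)]; linarith
    rw [mem_wlc] at hy
    simp only [fp, fm, apply_shift] at hy
    norm_num at hy
    rw [mem_lw]
    simp only [fp, fm]
    constructor <;> linarith [hy.1, hy.2]
  · exact interior_maximal (fun x hx => by
      rw [mem_lw] at hx; rw [mem_wlc]; exact ⟨le_of_lt hx.1, le_of_lt hx.2⟩) isOpen_lw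

end WProof
namespace WProof

variable {N : Matrix (Fin 4) (Fin 4) ℝ}

lemma pre_cc_rw : {x : V4 | ∀ y ∈ rightWedge, mink (x - y) (x - y) < 0} = WlC := by
  apply Set.eq_of_subset_of_subset
  · intro x hx
    by_contra hnot
    rw [mem_wlc, not_and_or, not_le, not_le] at hnot
    by_cases hx1 : 0 < x 1
    · have hy : (![0, x 1, x 2, x 3] : V4) ∈ rightWedge := by
        rw [mem_rw]
        show (0:ℝ) < x 1 + 0 ∧ (0:ℝ) < x 1 - 0
        constructor <;> linarith
      have := hx _ hy
      simp only [mink, Pi.sub_apply] at this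
      have e0 : (![0, x 1, x 2, x 3] : V4) 0 = 0 := rfl
      have e1 : (![0, x 1, x 2, x 3] : V4) 1 = x 1 := rfl
      have e2 : (![0, x 1, x 2, x 3] : V4) 2 = x 2 := rfl
      have e3 : (![0, x 1, x 2, x 3] : V4) 3 = x 3 := rfl
      rw [e0, e1, e2, e3] at this
      nlinarith [this]
    · push_neg at hx1
      set t := (x 1 + |x 0|) / 2 with ht
      have htpos : 0 < t := by
        rw [ht]
        simp only [fp, fm] at hnot
        rcases abs_cases (x 0) with ⟨h, _⟩ | ⟨h, _⟩ <;> rw [h] <;>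
          rcases hnot with h' | h' <;> linarith
      have hy : (![0, t, x 2, x 3] : V4) ∈ rightWedge := by
        rw [mem_rw]
        show (0:ℝ) < t + 0 ∧ (0:ℝ) < t - 0
        constructor <;> linarith
      have := hx _ hy
      simp only [mink, Pi.sub_apply] at this
      have e0 : (![0, t, x 2, x 3] : V4) 0 = 0 := rfl
      have e1 : (![0, t, x 2, x 3] : V4) 1 = t := rfl
      have e2 : (![0, t, x 2, x 3] : V4) 2 = x 2 := rfl
      have e3 : (![0, t, x 2, x 3] : V4) 3 = x 3 := rfl
      rw [e0, e1, e2, e3] at this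
      have habs : |x 0| = 2 * t - x 1 := by rw [ht]; ring
      rcases abs_cases (x 0) with ⟨h, _⟩ | ⟨h, _⟩ <;> nlinarith [this]
  · intro x hx y hy
    rw [mem_wlc] at hx
    rw [mem_rw] at hy
    have h1 : fp (x - y) < 0 := by
      simp only [fp, Pi.sub_apply] at *
      linarith [hx.1, hy.1]
    have h2 : fm (x - y) < 0 := by
      simp only [fm, Pi.sub_apply] at *
      linarith [hx.2, hy.2]
    simp only [fp, fm, Pi.sub_apply] at h1 h2
    simp only [mink, Pi.sub_apply]
    nlinarith [mul_pos (neg_pos.mpr h1) (neg_pos.mpr h2), sq_nonneg (x 2 - y 2),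
      sq_nonneg (x 3 - y 3)]

lemma cc_rw : causalCompl rightWedge = leftWedge := by
  unfold causalCompl
  rw [pre_cc_rw, interior_wlc]

lemma cc_aff (hN : MPres N) (hdet : IsUnit N.det) (b : V4) (S : Set V4) :
    causalCompl (aff N b '' S) = aff N b '' causalCompl S := by
  have hpre : {x : V4 | ∀ y ∈ aff N b '' S, mink (x - y) (x - y) < 0} =
      aff N b '' {x : V4 | ∀ y ∈ S, mink (x - y) (x - y) < 0} := by
    apply Set.eq_of_subset_of_subset
    · intro x hx
      refine ⟨N⁻¹.mulVec (x - b), ?_, ?_⟩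
      · intro y' hy'
        have key : N.mulVec (N⁻¹.mulVec (x - b) - y') = x - aff N b y' := by
          rw [Matrix.mulVec_sub, mulVec_inv_cancel hdet, aff_apply]
          abel
        have := hx (aff N b y') ⟨y', hy', rfl⟩
        rw [← hN, key]
        exact this
      · rw [aff_apply, mulVec_inv_cancel hdet]
        abel
    · rintro x ⟨x', hx', rfl⟩ y ⟨y', hy', rfl⟩
      have key : aff N b x' - aff N b y' = N.mulVec (x' - y') := by
        rw [Matrix.mulVec_sub, aff_apply, aff_apply]
        abel
      rw [key, hN]
      exact hx' y' hy'
  unfold causalCompl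
  rw [hpre, aff_image_interior hdet]

def Rm : Matrix (Fin 4) (Fin 4) ℝ := Matrix.diagonal ![1,-1,-1,1]

lemma Rm_mulVec (x : V4) : Rm.mulVec x = ![x 0, -x 1, -x 2, x 3] := by
  funext i
  rw [Rm, Matrix.mulVec_diagonal]
  fin_cases i
  · show (1:ℝ) * x 0 = x 0; ring
  · show (-1:ℝ) * x 1 = -x 1; ring
  · show (-1:ℝ) * x 2 = -x 2; ring
  · show (1:ℝ) * x 3 = x 3; ring

lemma Rm_mem : Rm ∈ LorentzPO := by
  refine ⟨?_, ?_, ?_⟩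
  · intro x y
    rw [Rm_mulVec, Rm_mulVec]
    show x 0 * y 0 - (-x 1) * (-y 1) - (-x 2) * (-y 2) - x 3 * y 3 = mink x y
    simp only [mink]
    ring
  · rw [Rm, Matrix.det_diagonal, Fin.prod_univ_four]
    norm_num [Matrix.cons_val_two, Matrix.cons_val_three]
  · rw [Rm, Matrix.diagonal_apply_eq]
    norm_num

lemma lw_image : aff Rm 0 '' rightWedge = leftWedge := by
  apply Set.eq_of_subset_of_subset
  · rintro y ⟨x, hx, rfl⟩
    rw [mem_rw] at hx
    rw [aff_apply, Rm_mulVec, add_zero, mem_lw]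
    show (-x 1) + x 0 < 0 ∧ (-x 1) - x 0 < 0
    simp only [fp, fm] at hx
    constructor <;> linarith [hx.1, hx.2]
  · intro y hy
    rw [mem_lw] at hy
    refine ⟨![y 0, -y 1, -y 2, y 3], ?_, ?_⟩
    · rw [mem_rw]
      show (0:ℝ) < -y 1 + y 0 ∧ (0:ℝ) < -y 1 - y 0
      simp only [fp, fm] at hy
      constructor <;> linarith [hy.1, hy.2]
    · rw [aff_apply, Rm_mulVec, add_zero]
      funext i
      fin_cases i
      · show y 0 = y 0; rfl
      · show -(-y 1) = y 1; ring
      · show -(-y 2) = y 2; ring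
      · show y 3 = y 3; rfl

lemma lor_det {Λ : Matrix (Fin 4) (Fin 4) ℝ} (h : Λ ∈ LorentzPO) : IsUnit Λ.det := by
  rw [h.2.1]; exact isUnit_one

lemma wedge_iff {S : Set V4} : S ∈ WedgeSet ↔
    ∃ Λ a, Λ ∈ LorentzPO ∧ S = aff Λ a '' rightWedge := Iff.rfl

lemma wedge_open {S : Set V4} (hS : S ∈ WedgeSet) : IsOpen S := by
  obtain ⟨Λ, a, hΛ, rfl⟩ := wedge_iff.mp hS
  exact ((affHomeo Λ (lor_det hΛ) a).isOpen_image).mpr isOpen_rw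

lemma wedge_translate {S : Set V4} (hS : S ∈ WedgeSet) (v : V4) :
    aff 1 v '' S ∈ WedgeSet := by
  obtain ⟨Λ, a, hΛ, rfl⟩ := wedge_iff.mp hS
  rw [aff_image_image, one_mul, Matrix.one_mulVec]
  exact ⟨Λ, a + v, hΛ, rfl⟩

lemma mulRm_mem {Λ : Matrix (Fin 4) (Fin 4) ℝ} (hΛ : Λ ∈ LorentzPO) :
    Λ * Rm ∈ LorentzPO := by
  refine ⟨mpres_mul hΛ.1 Rm_mem.1, ?_, ?_⟩
  · rw [Matrix.det_mul, hΛ.2.1, Rm_mem.2.1, one_mul]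
  · rw [Matrix.mul_apply, Fin.sum_univ_four]
    have h0 : Rm 0 0 = 1 := by rw [Rm, Matrix.diagonal_apply_eq]; rfl
    have h1 : Rm 1 0 = 0 := by rw [Rm]; exact Matrix.diagonal_apply_ne _ (by decide)
    have h2 : Rm 2 0 = 0 := by rw [Rm]; exact Matrix.diagonal_apply_ne _ (by decide)
    have h3 : Rm 3 0 = 0 := by rw [Rm]; exact Matrix.diagonal_apply_ne _ (by decide)
    rw [h0, h1, h2, h3]
    have := hΛ.2.2
    nlinarith [this]

lemma cc_wedge_form {Λ : Matrix (Fin 4) (Fin 4) ℝ} {a : V4} (hΛ : Λ ∈ LorentzPO) :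
    causalCompl (aff Λ a '' rightWedge) = aff Λ a '' leftWedge := by
  rw [cc_aff hΛ.1 (lor_det hΛ), cc_rw]

lemma cc_mem_wedge {S : Set V4} (hS : S ∈ WedgeSet) : causalCompl S ∈ WedgeSet := by
  obtain ⟨Λ, a, hΛ, rfl⟩ := wedge_iff.mp hS
  rw [cc_wedge_form hΛ, ← lw_image, aff_image_image, Matrix.mulVec_zero, zero_add]
  exact ⟨Λ * Rm, a, mulRm_mem hΛ, rfl⟩

end WProof
namespace WProof

variable {N K : Matrix (Fin 4) (Fin 4) ℝ}

lemma fp_e1v : fp e1v = 1 := by simp [fp]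
lemma fm_e1v : fm e1v = 1 := by simp [fm]

lemma fp_sub (x y : V4) : fp (x - y) = fp x - fp y := by simp [fp]; ring
lemma fm_sub (x y : V4) : fm (x - y) = fm x - fm y := by simp [fm]; ring

lemma rig_sub_aux (hK : MPres K) {c : V4}
    (h : aff K c '' rightWedge ⊆ rightWedge) :
    ∀ d ∈ rightWedge, 0 ≤ fp (K.mulVec d) ∧ 0 ≤ fm (K.mulVec d) := by
  intro d hd
  rw [mem_rw] at hd
  have hmem : ∀ t : ℝ, 0 ≤ t →
      (0 < (fp (K.mulVec e1v) + fp c) + t * fp (K.mulVec d) ∧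
       0 < (fm (K.mulVec e1v) + fm c) + t * fm (K.mulVec d)) := by
    intro t ht
    have he : e1v + t • d ∈ rightWedge := by
      rw [mem_rw, fp_add, fm_add, fp_smul, fm_smul, fp_e1v, fm_e1v]
      constructor <;> nlinarith [hd.1, hd.2]
    have := h ⟨e1v + t • d, he, rfl⟩
    rw [mem_rw] at this
    rw [aff_apply, Matrix.mulVec_add, Matrix.mulVec_smul, fp_add, fm_add, fp_add, fm_add,
      fp_smul, fm_smul] at this
    constructor <;> [linarith [this.1]; linarith [this.2]]
  exact ⟨nonneg_of_forall_affine (fun t ht => (hmem t ht).1),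
    nonneg_of_forall_affine (fun t ht => (hmem t ht).2)⟩

lemma rig_std (hK : MPres K) (hdet : IsUnit K.det) {c : V4}
    (h : aff K c '' rightWedge ⊆ rightWedge ∨ rightWedge ⊆ aff K c '' rightWedge) :
    K.mulVec '' rightWedge = rightWedge := by
  rcases h with h | h
  · exact rig_core hK (rig_sub_aux hK h)
  · have h' : aff K⁻¹ (-(K⁻¹.mulVec c)) '' rightWedge ⊆ rightWedge := by
      rintro y ⟨x, hx, rfl⟩
      obtain ⟨z, hz, hzx⟩ := h hx
      have heq : aff K⁻¹ (-(K⁻¹.mulVec c)) x = z := by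
        rw [← hzx]
        simp only [aff_apply, Matrix.mulVec_add, inv_mulVec_cancel hdet]
        abel
      rw [heq]
      exact hz
    have hKinv := rig_core (mpres_inv hK hdet) (rig_sub_aux (mpres_inv hK hdet) h')
    calc K.mulVec '' rightWedge = K.mulVec '' (K⁻¹.mulVec '' rightWedge) := by rw [hKinv]
      _ = rightWedge := by
          rw [← Set.image_comp]
          have hid : K.mulVec ∘ K⁻¹.mulVec = id := funext (mulVec_inv_cancel hdet)
          rw [hid, Set.image_id]

lemma rig_cov {b : V4} (hN : MPres N) (hdet : IsUnit N.det)
    {U : Set V4} (hU : U ∈ WedgeSet)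
    (h : U ⊆ aff N b '' rightWedge ∨ aff N b '' rightWedge ⊆ U) :
    ∃ c : V4, U = aff N b '' (aff 1 c '' rightWedge) := by
  obtain ⟨Λ, aU, hΛ, rfl⟩ := wedge_iff.mp hU
  set K := N⁻¹ * Λ with hKdef
  set c0 := N⁻¹.mulVec (aU - b) with hc0def
  have hrepr : aff Λ aU '' rightWedge = aff N b '' (aff K c0 '' rightWedge) := by
    rw [aff_image_image]
    have hm : N * K = Λ := by
      rw [hKdef, ← mul_assoc, Matrix.mul_nonsing_inv _ hdet, one_mul]
    have hb : N.mulVec c0 + b = aU := by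
      rw [hc0def, mulVec_inv_cancel hdet]
      abel
    rw [hm, hb]
  have hKdet : IsUnit K.det := by
    rw [hKdef, Matrix.det_mul]
    exact (Matrix.isUnit_nonsing_inv_det N hdet).mul (lor_det hΛ)
  have hKm : MPres K := by
    rw [hKdef]
    exact mpres_mul (mpres_inv hN hdet) hΛ.1
  have htrans : aff K c0 '' rightWedge ⊆ rightWedge ∨
      rightWedge ⊆ aff K c0 '' rightWedge := by
    rcases h with h | h
    · left
      rw [hrepr] at h
      exact (Set.image_subset_image_iff (aff_inj hdet b)).mp h
    · right
      rw [hrepr] at h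
      exact (Set.image_subset_image_iff (aff_inj hdet b)).mp h
  have hKC := rig_std hKm hKdet htrans
  refine ⟨c0, ?_⟩
  rw [hrepr]
  have h1 : aff K c0 '' rightWedge = aff 1 c0 '' (K.mulVec '' rightWedge) := by
    rw [← Set.image_comp]
    apply congrArg (· '' rightWedge)
    funext x
    simp only [Function.comp_apply, aff_one_apply, aff_apply, Matrix.one_mulVec]
  rw [h1, hKC]

lemma mkvec_fpfm (P M : ℝ) : fp (![(P-M)/2, (P+M)/2, 0, 0] : V4) = P ∧
    fm (![(P-M)/2, (P+M)/2, 0, 0] : V4) = M := by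
  constructor
  · show (P+M)/2 + (P-M)/2 = P
    ring
  · show (P+M)/2 - (P-M)/2 = M
    ring

lemma T2_sub {u : V4} (h : 0 ≤ fp u ∧ 0 ≤ fm u) : aff 1 u '' rightWedge ⊆ rightWedge := by
  rintro y ⟨x, hx, rfl⟩
  rw [mem_rw] at hx
  rw [aff_one_apply, mem_rw, fp_add, fm_add]
  constructor <;> linarith [hx.1, hx.2, h.1, h.2]

lemma T1_iff {u : V4} : rightWedge ⊆ aff 1 u '' rightWedge ↔ (fp u ≤ 0 ∧ fm u ≤ 0) := by
  constructor
  · intro h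
    by_contra hc
    rw [not_and_or, not_le, not_le] at hc
    rcases hc with hc | hc
    · have hx : (![(fp u - 1)/2, (fp u + 1)/2, 0, 0] : V4) ∈ rightWedge := by
        rw [mem_rw, (mkvec_fpfm (fp u) 1).1, (mkvec_fpfm (fp u) 1).2]
        exact ⟨hc, one_pos⟩
      have := h hx
      rw [mem_aff_one, mem_rw, fp_sub, fm_sub, (mkvec_fpfm (fp u) 1).1] at this
      linarith [this.1]
    · have hx : (![(1 - fm u)/2, (1 + fm u)/2, 0, 0] : V4) ∈ rightWedge := by
        rw [mem_rw, (mkvec_fpfm 1 (fm u)).1, (mkvec_fpfm 1 (fm u)).2]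
        exact ⟨one_pos, hc⟩
      have := h hx
      rw [mem_aff_one, mem_rw, fp_sub, fm_sub, (mkvec_fpfm 1 (fm u)).2] at this
      linarith [this.2]
  · intro h x hx
    rw [mem_rw] at hx
    rw [mem_aff_one, mem_rw, fp_sub, fm_sub]
    constructor <;> linarith [hx.1, hx.2, h.1, h.2]

lemma T4_empty {w : V4} (hw : ¬(fp w ≤ 0 ∧ fm w ≤ 0)) :
    WlC ∩ (aff 1 w '' WrC) = ∅ := by
  rw [not_and_or, not_le, not_le] at hw
  ext z
  simp only [Set.mem_inter_iff, Set.mem_empty_iff_false, iff_false, not_and]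
  intro hz1 hz2
  rw [mem_wlc] at hz1
  rw [mem_aff_one, mem_wrc, fp_sub, fm_sub] at hz2
  rcases hw with hw | hw <;> [linarith [hz1.1, hz2.1]; linarith [hz1.2, hz2.2]]

lemma T6 {x : V4} (hx : ¬(fp x ≤ 0 ∧ fm x ≤ 0)) :
    ∃ u : V4, ¬(fp u ≤ 0 ∧ fm u ≤ 0) ∧ x - u ∈ rightWedge := by
  rw [not_and_or, not_le, not_le] at hx
  rcases hx with hx | hx
  · refine ⟨![(fp x / 2 - (fm x - 1))/2, (fp x / 2 + (fm x - 1))/2, 0, 0], ?_, ?_⟩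
    · rw [not_and_or, not_le, not_le, (mkvec_fpfm (fp x / 2) (fm x - 1)).1]
      left; linarith
    · rw [mem_rw, fp_sub, fm_sub, (mkvec_fpfm (fp x / 2) (fm x - 1)).1,
        (mkvec_fpfm (fp x / 2) (fm x - 1)).2]
      constructor <;> linarith
  · refine ⟨![((fp x - 1) - fm x / 2)/2, ((fp x - 1) + fm x / 2)/2, 0, 0], ?_, ?_⟩
    · rw [not_and_or, not_le, not_le, (mkvec_fpfm (fp x - 1) (fm x / 2)).2]
      right; linarith
    · rw [mem_rw, fp_sub, fm_sub, (mkvec_fpfm (fp x - 1) (fm x / 2)).1,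
        (mkvec_fpfm (fp x - 1) (fm x / 2)).2]
      constructor <;> linarith

end WProof
namespace WProof

lemma aff_one_shift (N : Matrix (Fin 4) (Fin 4) ℝ) (b u : V4) (S : Set V4) :
    aff N b '' (aff 1 u '' S) = aff N (N.mulVec u + b) '' S := by
  rw [aff_image_image, mul_one]

lemma aff_one_one (u v : V4) (S : Set V4) :
    aff 1 u '' (aff 1 v '' S) = aff 1 (v + u) '' S := by
  rw [aff_image_image, one_mul, Matrix.one_mulVec]

lemma main_incl
    (τ : Set V4 → Set V4)
    (hmaps : ∀ W ∈ WedgeSet, τ W ∈ WedgeSet)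
    (hinvol : ∀ W ∈ WedgeSet, τ (τ W) = W)
    (hmono : ∀ W₁ ∈ WedgeSet, ∀ W₂ ∈ WedgeSet, W₁ ⊆ W₂ → τ W₁ ⊆ τ W₂)
    (hdisj : ∀ W₁ ∈ WedgeSet, ∀ W₂ ∈ WedgeSet,
      closure W₁ ∩ closure W₂ = ∅ → τ W₁ ∩ τ W₂ = ∅)
    {W : Set V4} (hW : W ∈ WedgeSet) :
    τ (causalCompl W) ⊆ causalCompl (τ W) := by
  obtain ⟨Λ, a, hΛ, hWeq⟩ := wedge_iff.mp hW
  have hBw : τ W ∈ WedgeSet := hmaps W hW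
  obtain ⟨M, bB, hM, hBeq⟩ := wedge_iff.mp hBw
  have hW' : causalCompl W ∈ WedgeSet := cc_mem_wedge hW
  have hW'eq : causalCompl W = aff Λ a '' leftWedge := by
    rw [hWeq, cc_wedge_form hΛ]
  have hccB : causalCompl (τ W) = aff M bB '' leftWedge := by
    rw [hBeq, cc_wedge_form hM]
  -- Main claim
  have claim : ∀ x ∈ τ (causalCompl W), ∀ u : V4, ¬(fp u ≤ 0 ∧ fm u ≤ 0) →
      x ∉ aff M bB '' (aff 1 u '' rightWedge) := by
    intro x hx u hu hxin
    set V := aff M bB '' (aff 1 u '' rightWedge) with hVdef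
    have hVwedge : V ∈ WedgeSet := by
      rw [hVdef, aff_one_shift]
      exact ⟨M, M.mulVec u + bB, hM, rfl⟩
    have hnsubvB : ¬ (τ W ⊆ V) := by
      rw [hBeq, hVdef]
      intro hsub
      have := (Set.image_subset_image_iff (aff_inj (lor_det hM) bB)).mp hsub
      exact hu (T1_iff.mp this)
    -- deep translate
    set P := max (fp u) 0 with hP
    set Q := max (fm u) 0 with hQ
    set u₂ : V4 := ![(P-Q)/2, (P+Q)/2, 0, 0] with hu₂
    have hfpu₂ : fp u₂ = P := (mkvec_fpfm P Q).1
    have hfmu₂ : fm u₂ = Q := (mkvec_fpfm P Q).2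
    set D := aff M bB '' (aff 1 u₂ '' rightWedge) with hDdef
    have hDwedge : D ∈ WedgeSet := by
      rw [hDdef, aff_one_shift]
      exact ⟨M, M.mulVec u₂ + bB, hM, rfl⟩
    have hDsubB : D ⊆ τ W := by
      rw [hDdef, hBeq]
      apply Set.image_mono
      intro y hy
      exact T2_sub ⟨by rw [hfpu₂]; exact le_max_right _ _,
        by rw [hfmu₂]; exact le_max_right _ _⟩ hy
    have hDsubV : D ⊆ V := by
      rw [hDdef, hVdef]
      apply Set.image_mono
      have hrepr : aff 1 u₂ '' rightWedge = aff 1 u '' (aff 1 (u₂ - u) '' rightWedge) := by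
        rw [aff_one_one, sub_add_cancel]
      rw [hrepr]
      apply Set.image_mono
      apply T2_sub
      constructor
      · rw [fp_sub, hfpu₂]; have := le_max_left (fp u) 0; linarith
      · rw [fm_sub, hfmu₂]; have := le_max_left (fm u) 0; linarith
    -- τ D ⊆ W, rigidity
    have hτD : τ D ⊆ W := by
      have := hmono D hDwedge (τ W) hBw hDsubB
      rwa [hinvol W hW] at this
    rw [hWeq] at hτD
    obtain ⟨w₂, hw₂⟩ := rig_cov hΛ.1 (lor_det hΛ) (hmaps D hDwedge) (Or.inl hτD)
    -- τ V ⊇ τ D, rigidity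
    have hτDV : τ D ⊆ τ V := hmono D hDwedge V hVwedge hDsubV
    have hw₂' : aff Λ (Λ.mulVec w₂ + a) '' rightWedge ⊆ τ V := by
      rw [← aff_one_shift, ← hw₂]
      exact hτDV
    obtain ⟨cV, hcV⟩ := rig_cov hΛ.1 (lor_det hΛ) (hmaps V hVwedge) (Or.inr hw₂')
    set w := cV + w₂ with hwdef
    have hτVeq : τ V = aff Λ a '' (aff 1 w '' rightWedge) := by
      rw [hcV, aff_one_shift, aff_one_shift]
      have : Λ.mulVec cV + (Λ.mulVec w₂ + a) = Λ.mulVec w + a := by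
        rw [hwdef, Matrix.mulVec_add]
        abel
      rw [this]
    -- ¬ (W ⊆ τ V)
    have hWnotsub : ¬ (W ⊆ τ V) := by
      intro hsub
      apply hnsubvB
      have := hmono W hW (τ V) (hmaps V hVwedge) hsub
      rwa [hinvol V hVwedge] at this
    have hwcond : ¬(fp w ≤ 0 ∧ fm w ≤ 0) := by
      intro hc
      apply hWnotsub
      rw [hWeq, hτVeq]
      exact Set.image_mono (T1_iff.mpr hc)
    -- closure disjointness
    have hclos : closure (causalCompl W) ∩ closure (τ V) = ∅ := by
      rw [hW'eq, hτVeq, aff_image_closure (lor_det hΛ), aff_image_closure (lor_det hΛ),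
        closure_lw]
      have hone : IsUnit (1 : Matrix (Fin 4) (Fin 4) ℝ).det := by
        rw [Matrix.det_one]; exact isUnit_one
      rw [aff_image_closure hone, closure_rw,
        ← Set.image_inter (aff_inj (lor_det hΛ) a), T4_empty hwcond, Set.image_empty]
    have hempty := hdisj (causalCompl W) hW' (τ V) (hmaps V hVwedge) hclos
    have hx2 : x ∈ τ (τ V) := by
      rw [hinvol V hVwedge]
      exact hxin
    exact Set.eq_empty_iff_forall_notMem.mp hempty x ⟨hx, hx2⟩
  -- conclude
  have hsub : τ (causalCompl W) ⊆ aff M bB '' WlC := by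
    intro x hx
    have hMdet := lor_det hM
    set x' := M⁻¹.mulVec (x - bB) with hx'def
    have hxx : aff M bB x' = x := by
      rw [aff_apply, hx'def, mulVec_inv_cancel hMdet]
      abel
    refine ⟨x', ?_, hxx⟩
    by_contra hnot
    rw [mem_wlc] at hnot
    obtain ⟨u, hu1, hu2⟩ := T6 hnot
    exact claim x hx u hu1 ⟨x', mem_aff_one.mpr hu2, hxx⟩
  have hopen : IsOpen (τ (causalCompl W)) := wedge_open (hmaps _ hW')
  have := interior_maximal hsub hopen
  rwa [aff_image_interior (lor_det hM), interior_wlc, ← hccB] at this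

end WProof

/-- Let `τ` be an involutive bijection of the set of wedges which
preserves inclusions and maps pairs of wedges with disjoint closures to disjoint
wedges.  Then `τ` commutes with taking causal complements: `τ(W') = (τ W)'` for
every wedge `W`. -/
theorem wedge_transform_commutes_with_causal_complement
    (τ : Set (Fin 4 → ℝ) → Set (Fin 4 → ℝ))
    (hmaps : ∀ W ∈ WedgeSet, τ W ∈ WedgeSet)
    (hinvol : ∀ W ∈ WedgeSet, τ (τ W) = W)
    (hmono : ∀ W₁ ∈ WedgeSet, ∀ W₂ ∈ WedgeSet, W₁ ⊆ W₂ → τ W₁ ⊆ τ W₂)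
    (hdisj : ∀ W₁ ∈ WedgeSet, ∀ W₂ ∈ WedgeSet,
      closure W₁ ∩ closure W₂ = ∅ → τ W₁ ∩ τ W₂ = ∅) :
    ∀ W ∈ WedgeSet, τ (causalCompl W) = causalCompl (τ W) := by
  intro W hW
  apply Set.Subset.antisymm
  · exact WProof.main_incl τ hmaps hinvol hmono hdisj hW
  · have h2 := WProof.main_incl τ hmaps hinvol hmono hdisj (hmaps W hW)
    rw [hinvol W hW] at h2
    have hccτW : causalCompl (τ W) ∈ WedgeSet := WProof.cc_mem_wedge (hmaps W hW)
    have hccW : causalCompl W ∈ WedgeSet := WProof.cc_mem_wedge hW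
    have h3 := hmono _ (hmaps _ hccτW) _ hccW h2
    rwa [hinvol _ hccτW] at h3
end
end

section
/- Let A be a unital C*-algebra and α an action of the translation group ℝ^d on A by *-automorphisms such that x ↦ α_x(a) is norm-continuous for each a ∈ A, and let θ be an isometric conjugate-linear *-automorphism of A with θ ∘ α_x = α_{−x} ∘ θ for all x ∈ ℝ^d. Equip ℝ^d with the Minkowski form ⟨x,y⟩ = x⁰y⁰ − Σ_{i=1}^{d−1} xⁱyⁱ and let cl V⁺ = {x : x⁰ ≥ 0 and ⟨x,x⟩ ≥ 0} be the closed forward light cone. For integrable f : ℝ^d → ℂ and a ∈ A set a(f) = ∫ f(x)·α_x(a) dx (a Bochner integral). For q ∈ cl V⁺ let L_q = { a(f) : a ∈ A, f : ℝ^d → ℂ integrable, supp(𝓕f) ∩ (−q + cl V⁺) = ∅ }, where 𝓕f denotes the Fourier transform of f and supp its support. Then θ maps L_q onto itself: θ(L_q) = L_q. -/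
open MeasureTheory

noncomputable section

/-- The Minkowski form `⟨x,y⟩ = x⁰y⁰ − Σ_{i≠0} xⁱyⁱ` on `ℝ^d`. -/
def minkE (d : ℕ) [NeZero d] (x y : EuclideanSpace ℝ (Fin d)) : ℝ :=
  x 0 * y 0 - ∑ i ∈ Finset.univ.erase (0 : Fin d), x i * y i

/-- The closed forward light cone `cl V⁺ = {x : x⁰ ≥ 0, ⟨x,x⟩ ≥ 0}`. -/
def closedFwdCone (d : ℕ) [NeZero d] : Set (EuclideanSpace ℝ (Fin d)) :=
  {x | 0 ≤ x 0 ∧ 0 ≤ minkE d x x}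

/-- The left ideal `L_q`: all elements `a(f) = ∫ f(x)·α_x(a) dx` where the support of the
Fourier transform of `f` is disjoint from `−q + cl V⁺`. -/
def Lideal (d : ℕ) [NeZero d]
    {A : Type*} [NormedRing A] [StarRing A] [CStarRing A] [NormedAlgebra ℂ A]
    [CompleteSpace A] [StarModule ℂ A]
    (α : EuclideanSpace ℝ (Fin d) → A ≃⋆ₐ[ℂ] A)
    (q : EuclideanSpace ℝ (Fin d)) : Set A :=
  {b | ∃ (a : A) (f : EuclideanSpace ℝ (Fin d) → ℂ), Integrable f ∧
    Function.support (FourierTransform.fourier f) ∩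
      ((fun v => -q + v) '' closedFwdCone d) = ∅ ∧
    b = ∫ x, f x • α x a}

section Aux

open Complex RealInnerProductSpace
open scoped FourierTransform

variable {d : ℕ} [NeZero d] {A : Type*} [NormedRing A] [StarRing A] [CStarRing A]
  [NormedAlgebra ℂ A] [CompleteSpace A] [StarModule ℂ A]

/-- The reflected conjugate `x ↦ conj (f (-x))` of an integrable function is integrable. -/
lemma integrable_conj_neg {f : EuclideanSpace ℝ (Fin d) → ℂ} (hf : Integrable f) :
    Integrable (fun x => starRingEnd ℂ (f (-x))) := by
  have h1 : Integrable ((fun x => f (-x))) := by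
    have := (Measure.measurePreserving_neg
        (volume : Measure (EuclideanSpace ℝ (Fin d)))).integrable_comp_emb
      (MeasurableEquiv.neg (EuclideanSpace ℝ (Fin d))).measurableEmbedding (g := f)
    exact this.2 hf
  exact (Complex.conjLIE.integrable_comp_iff).2 h1

/-- The Fourier transform of `x ↦ conj (f (-x))` is the conjugate of the Fourier transform. -/
lemma fourier_conj_neg (f : EuclideanSpace ℝ (Fin d) → ℂ) (w : EuclideanSpace ℝ (Fin d)) :
    𝓕 (fun x => starRingEnd ℂ (f (-x))) w = starRingEnd ℂ (𝓕 f w) := by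
  rw [Real.fourier_eq, Real.fourier_eq, ← integral_conj,
    ← integral_neg_eq_self (fun v => (starRingEnd ℂ) (𝐞 (-⟪v, w⟫) • f v)) volume]
  congr 1
  funext v
  simp only [inner_neg_left, neg_neg, Circle.smul_def, Real.fourierChar_apply, smul_eq_mul,
    map_mul, ← Complex.exp_conj, map_mul, Complex.conj_I, Complex.conj_ofReal]
  congr 1
  push_cast
  ring_nf

/-- Integrability of the integrand of `a(f)`. -/
lemma integrable_smul_alpha (α : EuclideanSpace ℝ (Fin d) → A ≃⋆ₐ[ℂ] A)
    (hα_cont : ∀ a : A, Continuous fun x : EuclideanSpace ℝ (Fin d) => α x a)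
    {f : EuclideanSpace ℝ (Fin d) → ℂ} (hf : Integrable f) (a : A) :
    Integrable (fun x => f x • α x a) := by
  letI : CStarAlgebra A :=
    { ‹NormedRing A›, ‹StarRing A›, ‹CStarRing A›, ‹NormedAlgebra ℂ A›, ‹StarModule ℂ A›,
      ‹CompleteSpace A› with }
  refine (hf.norm.mul_const ‖a‖).mono'
    (hf.aestronglyMeasurable.smul (hα_cont a).aestronglyMeasurable) ?_
  filter_upwards with x
  rw [norm_smul, StarAlgEquiv.norm_map]

/-- The key step: any additive, conjugate-linear, isometric map intertwining `α` as
`θ ∘ α_x = α_{−x} ∘ θ` maps `L_q` into `L_q`. -/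
lemma theta_image_subset
    (α : EuclideanSpace ℝ (Fin d) → A ≃⋆ₐ[ℂ] A)
    (hα_cont : ∀ a : A, Continuous fun x : EuclideanSpace ℝ (Fin d) => α x a)
    (θ : A → A)
    (hθ_add : ∀ a b : A, θ (a + b) = θ a + θ b)
    (hθ_smul : ∀ (c : ℂ) (a : A), θ (c • a) = (starRingEnd ℂ c) • θ a)
    (hθ_isom : ∀ a : A, ‖θ a‖ = ‖a‖)
    (hθα : ∀ (x : EuclideanSpace ℝ (Fin d)) (a : A), θ (α x a) = α (-x) (θ a))
    (q : EuclideanSpace ℝ (Fin d)) :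
    θ '' Lideal d α q ⊆ Lideal d α q := by
  rintro _ ⟨b, ⟨a, f, hf, hsupp, rfl⟩, rfl⟩
  set g : EuclideanSpace ℝ (Fin d) → ℂ := fun x => starRingEnd ℂ (f (-x)) with hg
  have hgint : Integrable g := integrable_conj_neg hf
  refine ⟨θ a, g, hgint, ?_, ?_⟩
  · -- support of 𝓕 g equals support of 𝓕 f
    have : Function.support (FourierTransform.fourier g) =
        Function.support (FourierTransform.fourier f) := by
      ext p
      simp only [Function.mem_support, hg, fourier_conj_neg, ne_eq, map_eq_zero]
    rw [this]
    exact hsupp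
  · -- θ (∫ f x • α x a) = ∫ g x • α x (θ a)
    -- θ as a continuous ℝ-linear map
    have hθ_rsmul : ∀ (r : ℝ) (a : A), θ (r • a) = r • θ a := by
      intro r a
      rw [← Complex.coe_smul, hθ_smul, Complex.conj_ofReal, Complex.coe_smul]
    let L : A →L[ℝ] A :=
      LinearMap.mkContinuous
        { toFun := θ, map_add' := hθ_add, map_smul' := hθ_rsmul } 1
        (fun a => by simp [hθ_isom a])
    have hint : Integrable (fun x => f x • α x a) := integrable_smul_alpha α hα_cont hf a
    have hcomm : θ (∫ x, f x • α x a) = ∫ x, θ (f x • α x a) :=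
      (L.integral_comp_comm hint).symm
    rw [hcomm]
    have hpt : (fun x => θ (f x • α x a)) =
        fun x => (fun y => g y • α y (θ a)) (-x) := by
      funext x
      simp only [hθ_smul, hθα, hg, neg_neg]
    rw [hpt, integral_neg_eq_self (fun y => g y • α y (θ a)) volume]

end Aux

/-- Let `α` be a strongly continuous action of the translation group
`ℝ^d` on a unital C*-algebra `A` by *-automorphisms, and `θ` an isometric
conjugate-linear *-automorphism with `θ ∘ α_x = α_{−x} ∘ θ`.  Then for every `q` in the
closed forward light cone, `θ` maps the left ideal `L_q` onto itself. -/
theorem theta_preserves_spectral_left_ideal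
    (d : ℕ) [NeZero d]
    {A : Type*} [NormedRing A] [StarRing A] [CStarRing A] [NormedAlgebra ℂ A]
    [CompleteSpace A] [StarModule ℂ A]
    (α : EuclideanSpace ℝ (Fin d) → A ≃⋆ₐ[ℂ] A)
    (hα_grp : ∀ x y : EuclideanSpace ℝ (Fin d), ∀ a : A, α (x + y) a = α x (α y a))
    (hα_zero : ∀ a : A, α 0 a = a)
    (hα_cont : ∀ a : A, Continuous fun x : EuclideanSpace ℝ (Fin d) => α x a)
    (θ : A → A)
    (hθ_bij : Function.Bijective θ)
    (hθ_add : ∀ a b : A, θ (a + b) = θ a + θ b)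
    (hθ_smul : ∀ (c : ℂ) (a : A), θ (c • a) = (starRingEnd ℂ c) • θ a)
    (hθ_mul : ∀ a b : A, θ (a * b) = θ a * θ b)
    (hθ_star : ∀ a : A, θ (star a) = star (θ a))
    (hθ_isom : ∀ a : A, ‖θ a‖ = ‖a‖)
    (hθα : ∀ (x : EuclideanSpace ℝ (Fin d)) (a : A), θ (α x a) = α (-x) (θ a))
    (q : EuclideanSpace ℝ (Fin d)) (hq : q ∈ closedFwdCone d) :
    θ '' Lideal d α q = Lideal d α q := by
  -- the inverse of θ
  set e : A ≃ A := Equiv.ofBijective θ hθ_bij with he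
  have hθe : ∀ a, θ (e.symm a) = a := fun a => e.apply_symm_apply a
  have hinj : Function.Injective θ := hθ_bij.1
  have hψ_add : ∀ a b : A, e.symm (a + b) = e.symm a + e.symm b := by
    intro a b
    apply hinj
    rw [hθe, hθ_add, hθe, hθe]
  have hψ_smul : ∀ (c : ℂ) (a : A), e.symm (c • a) = (starRingEnd ℂ c) • e.symm a := by
    intro c a
    apply hinj
    rw [hθe, hθ_smul, hθe, RingHomCompTriple.comp_apply]
    simp
  have hψ_isom : ∀ a : A, ‖e.symm a‖ = ‖a‖ := by
    intro a
    rw [← hθ_isom (e.symm a), hθe]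
  have hψα : ∀ (x : EuclideanSpace ℝ (Fin d)) (a : A),
      e.symm (α x a) = α (-x) (e.symm a) := by
    intro x a
    apply hinj
    rw [hθe, hθα, neg_neg, hθe]
  apply Set.Subset.antisymm
  · exact theta_image_subset α hα_cont θ hθ_add hθ_smul hθ_isom hθα q
  · intro b hb
    have : e.symm b ∈ Lideal d α q :=
      theta_image_subset α hα_cont e.symm hψ_add hψ_smul hψ_isom hψα q
        ⟨b, hb, rfl⟩
    exact ⟨e.symm b, this, hθe b⟩
end
end

section
/- For a wedge W ∈ 𝒲 let E_W = {y ∈ ℝ⁴ : W + ty = W for all t ∈ ℝ} be the two-dimensional subspace of edge directions of W, and for S ⊆ ℝ⁴ let K_W(S) = S + E_W be the cylinder over S in the directions perpendicular to the characteristic two-plane of W. Then for every double cone D ⊂ ℝ⁴ the intersection of the cylinders over all wedges containing D equals D: ⋂{K_W(D) : W ∈ 𝒲, D ⊆ W} = D. -/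
noncomputable section

open Real
set_option maxHeartbeats 1000000

/-- The set of edge directions of a wedge: vectors `y` with `W + t·y = W` for all `t`. -/
def edgeDirs (W : Set (Fin 4 → ℝ)) : Set (Fin 4 → ℝ) :=
  {y | ∀ t : ℝ, (fun x => x + t • y) '' W = W}

/-- The cylinder `K_W(S) = S + E_W` over `S` in the edge directions of `W`. -/
def cylOver (W S : Set (Fin 4 → ℝ)) : Set (Fin 4 → ℝ) :=
  {z | ∃ s ∈ S, ∃ e ∈ edgeDirs W, z = s + e}

/-! ### Auxiliary material -/

/-- A spatial rotation built from two planar rotations, taking `e₁` to `(c'c, s'c, s)`. -/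
def rotMat (c s c' s' : ℝ) : Matrix (Fin 4) (Fin 4) ℝ :=
  Matrix.of ![![1,0,0,0], ![0, c'*c, -s', -(c'*s)], ![0, s'*c, c', -(s'*s)], ![0, s, 0, c]]

lemma rotMat_mulVec (c s c' s' : ℝ) (x : Fin 4 → ℝ) :
    (rotMat c s c' s').mulVec x =
      ![x 0, c'*c*x 1 - s'*x 2 - c'*s*x 3, s'*c*x 1 + c'*x 2 - s'*s*x 3, s*x 1 + c*x 3] := by
  funext i
  fin_cases i <;>
    simp [rotMat, Matrix.mulVec, dotProduct, Fin.sum_univ_four] <;> ring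

lemma rotMat_mem (c s c' s' : ℝ) (h1 : c^2+s^2=1) (h2 : c'^2+s'^2=1) :
    rotMat c s c' s' ∈ LorentzPO := by
  refine ⟨fun x y => ?_, ?_, ?_⟩
  · simp only [rotMat_mulVec, mink]
    simp only [Matrix.cons_val_zero, Matrix.cons_val_one, Matrix.head_cons,
      Matrix.cons_val_two, Matrix.tail_cons, Matrix.cons_val_three]
    linear_combination (-(c^2*x 1*y 1 + x 2*y 2 + s^2*x 3*y 3 - s*c*x 1*y 3 - s*c*x 3*y 1)) * h2
      + (-(x 1*y 1 + x 3*y 3)) * h1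
  · simp [rotMat, Matrix.det_succ_row_zero, Fin.sum_univ_succ]
    linear_combination (c^2+s^2) * h2 + h1
  · simp [rotMat]

lemma wedge_eq (c s c' s' : ℝ) (h1 : c^2+s^2=1) (h2 : c'^2+s'^2=1) (a : Fin 4 → ℝ) :
    ((fun x => (rotMat c s c' s').mulVec x + a) '' rightWedge)
      = {x | |x 0 - a 0| < c'*c*(x 1 - a 1) + s'*c*(x 2 - a 2) + s*(x 3 - a 3)} := by
  ext x
  constructor
  · rintro ⟨y, hy, rfl⟩
    simp only [rotMat_mulVec, Set.mem_setOf_eq, Pi.add_apply]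
    simp only [Matrix.cons_val_zero, Matrix.cons_val_one, Matrix.head_cons,
      Matrix.cons_val_two, Matrix.tail_cons, Matrix.cons_val_three]
    have key : c'*c*(c'*c*y 1 - s'*y 2 - c'*s*y 3 + a 1 - a 1)
        + s'*c*(s'*c*y 1 + c'*y 2 - s'*s*y 3 + a 2 - a 2)
        + s*(s*y 1 + c*y 3 + a 3 - a 3) = y 1 := by
      linear_combination (c^2*y 1 - c*s*y 3) * h2 + y 1 * h1
    rw [show y 0 + a 0 - a 0 = y 0 by ring, key]
    exact hy
  · intro hx
    refine ⟨![x 0 - a 0,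
        c'*c*(x 1 - a 1) + s'*c*(x 2 - a 2) + s*(x 3 - a 3),
        -s'*(x 1 - a 1) + c'*(x 2 - a 2),
        -(c'*s)*(x 1 - a 1) - s'*s*(x 2 - a 2) + c*(x 3 - a 3)], ?_, ?_⟩
    · simpa [rightWedge] using hx
    · funext i
      fin_cases i <;>
        simp [rotMat_mulVec, Matrix.cons_val_zero, Matrix.cons_val_one,
          Matrix.head_cons, Matrix.cons_val_two, Matrix.tail_cons, Matrix.cons_val_three]
      · linear_combination ((x 1 - a 1)*c'^2 + (x 2 - a 2)*c'*s') * h1 + (x 1 - a 1) * h2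
      · linear_combination ((x 1 - a 1)*c'*s' + (x 2 - a 2)*s'^2) * h1 + (x 2 - a 2) * h2
      · linear_combination (x 3 - a 3) * h1

lemma edge_sub (m1 m2 m3 : ℝ) (hm : m1^2+m2^2+m3^2 = 1) (a : Fin 4 → ℝ)
    (y : Fin 4 → ℝ)
    (hy : y ∈ edgeDirs {x | |x 0 - a 0| < m1*(x 1 - a 1) + m2*(x 2 - a 2) + m3*(x 3 - a 3)}) :
    y 0 = 0 ∧ m1*y 1 + m2*y 2 + m3*y 3 = 0 := by
  set M := m1*y 1 + m2*y 2 + m3*y 3 with hM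
  clear_value M
  have step : ∀ t : ℝ, |t * y 0| ≤ t * M := by
    intro t
    have hlt : ∀ u : ℝ, 0 < u → |t * y 0| < t * M + u := by
      intro u hu
      have hp : (fun i => a i + u * ![(0:ℝ), m1, m2, m3] i) ∈
          {x : Fin 4 → ℝ | |x 0 - a 0| < m1*(x 1 - a 1) + m2*(x 2 - a 2) + m3*(x 3 - a 3)} := by
        simp only [Set.mem_setOf_eq, Matrix.cons_val_zero, Matrix.cons_val_one,
          Matrix.head_cons, Matrix.cons_val_two, Matrix.tail_cons, Matrix.cons_val_three]
        rw [show a 0 + u * 0 - a 0 = (0:ℝ) by ring]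
        rw [abs_zero]
        nlinarith
      have himg := hy t
      have hp2 : (fun i => a i + u * ![(0:ℝ), m1, m2, m3] i) + t • y ∈
          {x : Fin 4 → ℝ | |x 0 - a 0| < m1*(x 1 - a 1) + m2*(x 2 - a 2) + m3*(x 3 - a 3)} := by
        rw [← himg]
        exact ⟨_, hp, rfl⟩
      simp only [Set.mem_setOf_eq, Pi.add_apply, Pi.smul_apply, smul_eq_mul,
        Matrix.cons_val_zero, Matrix.cons_val_one, Matrix.head_cons,
        Matrix.cons_val_two, Matrix.tail_cons, Matrix.cons_val_three] at hp2
      rw [show a 0 + u * 0 + t * y 0 - a 0 = t * y 0 by ring] at hp2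
      calc |t * y 0| < m1 * (a 1 + u * m1 + t * y 1 - a 1) + m2 * (a 2 + u * m2 + t * y 2 - a 2)
            + m3 * (a 3 + u * m3 + t * y 3 - a 3) := hp2
        _ = t * M + u * (m1^2 + m2^2 + m3^2) := by rw [hM]; ring
        _ = t * M + u := by rw [hm]; ring
    by_contra h
    push_neg at h
    have := hlt ((|t * y 0| - t * M)/2) (by linarith)
    linarith
  have h1 := step 1
  have h2 := step (-1)
  rw [one_mul] at h1
  rw [neg_one_mul, abs_neg] at h2
  have h0 : (0:ℝ) ≤ |y 0| := abs_nonneg _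
  have hM0 : M = 0 := by linarith
  constructor
  · have : |y 0| ≤ 0 := by linarith
    simpa using le_antisymm this h0
  · exact hM0

lemma exists_params (m1 m2 m3 : ℝ) (hm : m1^2+m2^2+m3^2 = 1) :
    ∃ c s c' s' : ℝ, c^2+s^2=1 ∧ c'^2+s'^2=1 ∧ c'*c = m1 ∧ s'*c = m2 ∧ s = m3 := by
  set r := Real.sqrt (m1^2+m2^2) with hr
  have hr2 : r^2 = m1^2+m2^2 := Real.sq_sqrt (by positivity)
  by_cases h : r = 0
  · have h12 : m1 = 0 ∧ m2 = 0 := by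
      rw [h] at hr2
      constructor <;> nlinarith
    refine ⟨0, m3, 1, 0, by nlinarith [h12.1, h12.2], by norm_num, by rw [mul_zero, h12.1],
      by rw [mul_zero, h12.2], rfl⟩
  · have hrpos : 0 < r := lt_of_le_of_ne (Real.sqrt_nonneg _) (Ne.symm h)
    refine ⟨r, m3, m1/r, m2/r, by nlinarith, ?_, by field_simp, by field_simp, rfl⟩
    field_simp
    linarith [hr2]

lemma cs3 (m1 m2 m3 v1 v2 v3 : ℝ) (hm : m1^2+m2^2+m3^2 = 1) :
    (m1*v1+m2*v2+m3*v3)^2 ≤ v1^2+v2^2+v3^2 := by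
  nlinarith [sq_nonneg (m1*v2-m2*v1), sq_nonneg (m1*v3-m3*v1), sq_nonneg (m2*v3-m3*v2)]

lemma bound3 (m1 m2 m3 v1 v2 v3 T : ℝ) (hm : m1^2+m2^2+m3^2 = 1)
    (hv : v1^2+v2^2+v3^2 < T^2) (hT : 0 < T) :
    -T < m1*v1+m2*v2+m3*v3 ∧ m1*v1+m2*v2+m3*v3 < T := by
  have h := cs3 m1 m2 m3 v1 v2 v3 hm
  constructor
  · nlinarith [sq_nonneg (m1*v1+m2*v2+m3*v3 + T)]
  · nlinarith [sq_nonneg (m1*v1+m2*v2+m3*v3 - T)]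

lemma sq_of_mul (p q r t : ℝ) (h : 0 < t*t - p*p - q*q - r*r) : p^2+q^2+r^2 < t^2 := by
  nlinarith

lemma pos_of_sq (p q r t : ℝ) (h : p^2+q^2+r^2 < t^2) : 0 < t*t - p*p - q*q - r*r := by
  nlinarith

lemma sq3_eq_zero (p q r : ℝ) (h : p^2+q^2+r^2 = 0) : p = 0 ∧ q = 0 ∧ r = 0 := by
  refine ⟨?_, ?_, ?_⟩ <;> nlinarith [sq_nonneg p, sq_nonneg q, sq_nonneg r]

lemma final_sq (m1 m2 m3 u1 u2 u3 T : ℝ) (hm : m1^2+m2^2+m3^2 = 1)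
    (h : 0 < T*T - u1*u1 - u2*u2 - u3*u3) : (m1*u1+m2*u2+m3*u3)^2 < T^2 := by
  have := cs3 m1 m2 m3 u1 u2 u3 hm
  nlinarith

lemma per_m (a b z : Fin 4 → ℝ) (hab : b - a ∈ fwdCone)
    (hz : z ∈ ⋂₀ {K | ∃ W, W ∈ WedgeSet ∧ {x | x - a ∈ fwdCone ∧ b - x ∈ fwdCone} ⊆ W ∧
      K = cylOver W {x | x - a ∈ fwdCone ∧ b - x ∈ fwdCone}})
    (m1 m2 m3 : ℝ) (hm : m1^2+m2^2+m3^2 = 1) :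
    0 < z 0 - a 0 ∧ (m1*(z 1-a 1)+m2*(z 2-a 2)+m3*(z 3-a 3))^2 < (z 0 - a 0)^2 ∧
    0 < b 0 - z 0 ∧ (m1*(b 1-z 1)+m2*(b 2-z 2)+m3*(b 3-z 3))^2 < (b 0 - z 0)^2 := by
  obtain ⟨c, s, c', s', h1, h2, e1, e2, e3⟩ := exists_params m1 m2 m3 hm
  have hab0 : 0 < b 0 - a 0 := by
    have := hab.1
    simpa [Pi.sub_apply] using this
  set aTr : Fin 4 → ℝ :=
    ![(a 0 + b 0)/2, a 1 - 2*(b 0 - a 0)*m1, a 2 - 2*(b 0 - a 0)*m2, a 3 - 2*(b 0 - a 0)*m3]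
    with haTr
  have haTr0 : aTr 0 = (a 0 + b 0)/2 := rfl
  have haTr1 : aTr 1 = a 1 - 2*(b 0 - a 0)*m1 := rfl
  have haTr2 : aTr 2 = a 2 - 2*(b 0 - a 0)*m2 := rfl
  have haTr3 : aTr 3 = a 3 - 2*(b 0 - a 0)*m3 := rfl
  set W : Set (Fin 4 → ℝ) :=
    {x | |x 0 - aTr 0| < m1*(x 1 - aTr 1) + m2*(x 2 - aTr 2) + m3*(x 3 - aTr 3)} with hW
  have hWmem : W ∈ WedgeSet := by
    refine ⟨rotMat c s c' s', aTr, rotMat_mem c s c' s' h1 h2, ?_⟩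
    rw [hW, ← e1, ← e2, ← e3]
    exact (wedge_eq c s c' s' h1 h2 aTr).symm
  have hDW : {x | x - a ∈ fwdCone ∧ b - x ∈ fwdCone} ⊆ W := by
    intro x hx
    obtain ⟨hx1, hx2⟩ := hx
    simp only [fwdCone, mink, Set.mem_setOf_eq, Pi.sub_apply] at hx1 hx2
    have hb1 := bound3 m1 m2 m3 (x 1 - a 1) (x 2 - a 2) (x 3 - a 3) (x 0 - a 0) hm
      (sq_of_mul _ _ _ _ hx1.2) hx1.1
    show |x 0 - aTr 0| < m1*(x 1 - aTr 1) + m2*(x 2 - aTr 2) + m3*(x 3 - aTr 3)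
    rw [haTr0, haTr1, haTr2, haTr3]
    have hexp : m1*(x 1 - (a 1 - 2*(b 0 - a 0)*m1)) + m2*(x 2 - (a 2 - 2*(b 0 - a 0)*m2))
        + m3*(x 3 - (a 3 - 2*(b 0 - a 0)*m3))
        = (m1*(x 1 - a 1)+m2*(x 2 - a 2)+m3*(x 3 - a 3)) + 2*(b 0 - a 0) := by
      linear_combination (2*(b 0 - a 0)) * hm
    rw [hexp, abs_lt]
    constructor
    · linarith [hb1.1, hx1.1, hx2.1]
    · linarith [hb1.1, hx1.1, hx2.1]
  have hzK : z ∈ cylOver W {x | x - a ∈ fwdCone ∧ b - x ∈ fwdCone} :=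
    Set.mem_sInter.mp hz (cylOver W {x | x - a ∈ fwdCone ∧ b - x ∈ fwdCone})
      ⟨W, hWmem, hDW, rfl⟩
  obtain ⟨sp, hsp, e, he, hze⟩ := hzK
  have hE : e 0 = 0 ∧ m1*e 1 + m2*e 2 + m3*e 3 = 0 := edge_sub m1 m2 m3 hm aTr e he
  have hz0 : z 0 = sp 0 := by
    have := congrFun hze 0
    simp only [Pi.add_apply] at this
    rw [this, hE.1, add_zero]
  have hzm : m1*(z 1 - a 1)+m2*(z 2 - a 2)+m3*(z 3 - a 3)
      = m1*(sp 1 - a 1)+m2*(sp 2 - a 2)+m3*(sp 3 - a 3) := by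
    have t1 := congrFun hze 1
    have t2 := congrFun hze 2
    have t3 := congrFun hze 3
    simp only [Pi.add_apply] at t1 t2 t3
    rw [t1, t2, t3]
    linear_combination hE.2
  have hzm' : m1*(b 1 - z 1)+m2*(b 2 - z 2)+m3*(b 3 - z 3)
      = m1*(b 1 - sp 1)+m2*(b 2 - sp 2)+m3*(b 3 - sp 3) := by
    have t1 := congrFun hze 1
    have t2 := congrFun hze 2
    have t3 := congrFun hze 3
    simp only [Pi.add_apply] at t1 t2 t3
    rw [t1, t2, t3]
    linear_combination -hE.2
  obtain ⟨hsp1, hsp2⟩ := hsp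
  simp only [fwdCone, mink, Set.mem_setOf_eq, Pi.sub_apply] at hsp1 hsp2
  have hcs1 := cs3 m1 m2 m3 (sp 1 - a 1) (sp 2 - a 2) (sp 3 - a 3) hm
  have hcs2 := cs3 m1 m2 m3 (b 1 - sp 1) (b 2 - sp 2) (b 3 - sp 3) hm
  refine ⟨by rw [hz0]; linarith [hsp1.1], ?_, by rw [hz0]; linarith [hsp2.1], ?_⟩
  · rw [hzm, hz0]
    exact final_sq m1 m2 m3 (sp 1 - a 1) (sp 2 - a 2) (sp 3 - a 3) (sp 0 - a 0) hm hsp1.2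
  · rw [hzm', hz0]
    exact final_sq m1 m2 m3 (b 1 - sp 1) (b 2 - sp 2) (b 3 - sp 3) (b 0 - sp 0) hm hsp2.2

/-- For every double cone `D ⊂ ℝ⁴` the intersection of the cylinders
`K_W(D) = D + E_W` over all wedges `W` containing `D` equals `D`. -/
theorem double_cone_eq_iInter_cylinders
    (D : Set (Fin 4 → ℝ)) (hD : IsDoubleCone D) :
    ⋂₀ {K | ∃ W, W ∈ WedgeSet ∧ D ⊆ W ∧ K = cylOver W D} = D := by
  obtain ⟨a, b, hab, hDeq⟩ := hD
  subst hDeq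
  apply Set.Subset.antisymm
  · intro z hz
    have h100 := per_m a b z hab hz 1 0 0 (by norm_num)
    constructor
    · -- z - a ∈ fwdCone
      have hz0 : 0 < z 0 - a 0 := h100.1
      by_cases hL : (z 1 - a 1)^2 + (z 2 - a 2)^2 + (z 3 - a 3)^2 = 0
      · refine ⟨by simpa [Pi.sub_apply] using hz0, ?_⟩
        obtain ⟨h1, h2, h3⟩ := sq3_eq_zero _ _ _ hL
        simp only [mink, Pi.sub_apply]
        rw [h1, h2, h3]
        nlinarith [mul_pos hz0 hz0]
      · set S := (z 1 - a 1)^2 + (z 2 - a 2)^2 + (z 3 - a 3)^2 with hS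
        have hSpos : 0 < S := lt_of_le_of_ne (by positivity) (Ne.symm hL)
        set L := Real.sqrt S with hLdef
        have hL2 : L^2 = S := Real.sq_sqrt (le_of_lt hSpos)
        have hLpos : 0 < L := Real.sqrt_pos.mpr hSpos
        have hLne : L ≠ 0 := ne_of_gt hLpos
        have hmunit : ((z 1 - a 1)/L)^2 + ((z 2 - a 2)/L)^2 + ((z 3 - a 3)/L)^2 = 1 := by
          field_simp
          rw [hL2, hS]
        have h := per_m a b z hab hz ((z 1 - a 1)/L) ((z 2 - a 2)/L) ((z 3 - a 3)/L) hmunit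
        have hexpr : ((z 1 - a 1)/L*(z 1 - a 1) + (z 2 - a 2)/L*(z 2 - a 2)
            + (z 3 - a 3)/L*(z 3 - a 3))^2 = S := by
          field_simp
          rw [hL2, hS]
          ring
        have hkey := h.2.1
        rw [hexpr, hS] at hkey
        refine ⟨by simpa [Pi.sub_apply] using hz0, ?_⟩
        simp only [mink, Pi.sub_apply]
        exact pos_of_sq _ _ _ _ hkey
    · -- b - z ∈ fwdCone
      have hz0 : 0 < b 0 - z 0 := h100.2.2.1
      by_cases hL : (b 1 - z 1)^2 + (b 2 - z 2)^2 + (b 3 - z 3)^2 = 0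
      · refine ⟨by simpa [Pi.sub_apply] using hz0, ?_⟩
        obtain ⟨h1, h2, h3⟩ := sq3_eq_zero _ _ _ hL
        simp only [mink, Pi.sub_apply]
        rw [h1, h2, h3]
        nlinarith [mul_pos hz0 hz0]
      · set S := (b 1 - z 1)^2 + (b 2 - z 2)^2 + (b 3 - z 3)^2 with hS
        have hSpos : 0 < S := lt_of_le_of_ne (by positivity) (Ne.symm hL)
        set L := Real.sqrt S with hLdef
        have hL2 : L^2 = S := Real.sq_sqrt (le_of_lt hSpos)
        have hLpos : 0 < L := Real.sqrt_pos.mpr hSpos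
        have hLne : L ≠ 0 := ne_of_gt hLpos
        have hmunit : ((b 1 - z 1)/L)^2 + ((b 2 - z 2)/L)^2 + ((b 3 - z 3)/L)^2 = 1 := by
          field_simp
          rw [hL2, hS]
        have h := per_m a b z hab hz ((b 1 - z 1)/L) ((b 2 - z 2)/L) ((b 3 - z 3)/L) hmunit
        have hexpr : ((b 1 - z 1)/L*(b 1 - z 1) + (b 2 - z 2)/L*(b 2 - z 2)
            + (b 3 - z 3)/L*(b 3 - z 3))^2 = S := by
          field_simp
          rw [hL2, hS]
          ring
        have hkey := h.2.2.2
        rw [hexpr, hS] at hkey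
        refine ⟨by simpa [Pi.sub_apply] using hz0, ?_⟩
        simp only [mink, Pi.sub_apply]
        exact pos_of_sq _ _ _ _ hkey
  · intro z hz
    rw [Set.mem_sInter]
    rintro K ⟨W, _, _, rfl⟩
    refine ⟨z, hz, 0, ?_, by simp⟩
    intro t
    simp
end
end
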